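/- arXiv:math/0603637 — 5 statements merged into one kernel-verified Lean document; each statement's English description precedes it below -/
import Mathlib

section
/- Fix constants a > 0 and b > 0. As t → ∞, ∫₀^∞ exp(-a t/u² - b u) du is asymptotically equivalent to √(π/3) · 2^{2/3} · a^{1/6} · b^{-2/3} · t^{1/6} · exp(-3 a^{1/3} b^{2/3} 2^{-2/3} t^{1/3}). -/
open Real MeasureTheory Filter
open Set

/-- The normalized phase function: `v + 1/(2v²) - 3/2`, written in factored form. -/
noncomputable def lapPhi (v : ℝ) : ℝ := (v - 1)^2 * (2*v + 1) / (2*v^2)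

lemma lapPhi_nonneg {v : ℝ} (hv : 0 < v) : 0 ≤ lapPhi v := by
  unfold lapPhi; positivity

lemma lapPhi_eq {v : ℝ} (hv : v ≠ 0) : lapPhi v = v + 1/(2*v^2) - 3/2 := by
  unfold lapPhi; field_simp; ring

lemma lapPhi_lb_mid {v : ℝ} (hv : 0 < v) (hv2 : v ≤ 3/2) : (v-1)^2/2 ≤ lapPhi v := by
  unfold lapPhi
  rw [div_le_div_iff₀ (by norm_num) (by positivity)]
  nlinarith [mul_nonneg (sq_nonneg (v-1)) (show 0 ≤ 2*v+1-v^2 by nlinarith)]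

lemma lapPhi_lb_right {v : ℝ} (hv : 3/2 ≤ v) : v/9 ≤ lapPhi v := by
  unfold lapPhi
  rw [le_div_iff₀ (by positivity)]
  nlinarith [sq_nonneg (v-3/2), sq_nonneg v]

lemma lapPhi_lb_left {v : ℝ} (hv : 0 < v) (hv2 : v ≤ 1/2) : 1/2 ≤ lapPhi v := by
  rw [lapPhi_eq hv.ne']
  have h : 2 ≤ 1/(2*v^2) := by
    rw [le_div_iff₀ (by positivity)]; nlinarith
  linarith

lemma lapPhi_scaled_lb {l w : ℝ} (hl : 1 ≤ l) (hw : -Real.sqrt l < w) :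
    |w|/9 - 1/2 ≤ l * lapPhi (1 + w / Real.sqrt l) := by
  set s := Real.sqrt l with hs
  have hl0 : (0:ℝ) < l := by linarith
  have hs1 : 1 ≤ s := by
    rw [hs, show (1:ℝ) = Real.sqrt 1 by simp]; exact Real.sqrt_le_sqrt hl
  have hs0 : 0 < s := by linarith
  have hss : s ^ 2 = l := Real.sq_sqrt hl0.le
  have hv0 : 0 < 1 + w / s := by
    have : -1 < w / s := by rw [lt_div_iff₀ hs0]; linarith
    linarith
  rcases le_or_gt |w| (s/2) with h | h
  · -- middle region
    have hws : |w / s| ≤ 1/2 := by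
      rw [abs_div, abs_of_pos hs0, div_le_iff₀ hs0]; linarith
    have hvle : 1 + w / s ≤ 3/2 := by
      have := (abs_le.mp hws).2; linarith
    have h1 := lapPhi_lb_mid hv0 hvle
    have h2 : l * ((1 + w / s - 1)^2/2) = w^2/2 := by
      field_simp
      rw [← hss]; ring
    have h3 := mul_le_mul_of_nonneg_left h1 hl0.le
    rw [h2] at h3
    nlinarith [abs_nonneg w, sq_abs w]
  · rcases le_or_gt 0 w with hw0 | hw0
    · -- right region
      have hwpos : s/2 < w := lt_of_lt_of_le h (le_of_eq (abs_of_nonneg hw0))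
      have hvge : 3/2 ≤ 1 + w / s := by
        have : 1/2 ≤ w / s := by rw [le_div_iff₀ hs0]; linarith
        linarith
      have h1 := lapPhi_lb_right hvge
      have h2 : l * ((1 + w / s)/9) = (l + s * w)/9 := by
        field_simp
        rw [← hss]; ring
      have h3 := mul_le_mul_of_nonneg_left h1 hl0.le
      rw [h2] at h3
      have h4 : w ≤ s * w := le_mul_of_one_le_left hw0 hs1
      rw [abs_of_nonneg hw0]
      linarith
    · -- left region
      have habs : |w| = -w := abs_of_neg hw0
      have hwlt : w < -(s/2) := by rw [habs] at h; linarith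
      have hvle : 1 + w / s ≤ 1/2 := by
        have : w / s ≤ -(1/2) := by rw [div_le_iff₀ hs0]; linarith
        linarith
      have h1 := lapPhi_lb_left hv0 hvle
      have h3 := mul_le_mul_of_nonneg_left h1 hl0.le
      have h4 : w^2 < l := by
        rw [← hss]; nlinarith
      nlinarith [abs_nonneg w, sq_abs w]

lemma integrable_dom : Integrable (fun w : ℝ => Real.exp (1/2 - |w|/9)) := by
  have h0 : IntegrableOn (fun w : ℝ => Real.exp (1/2 - |w|/9)) (Ioi 0) := by
    have h : IntegrableOn (fun x : ℝ => Real.exp (1/2) * Real.exp (-(1/9) * x)) (Ioi 0) :=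
      (exp_neg_integrableOn_Ioi 0 (show (0:ℝ) < 1/9 by norm_num)).const_mul (Real.exp (1/2))
    apply h.congr_fun ?_ measurableSet_Ioi
    intro x hx
    simp only [← Real.exp_add]
    rw [abs_of_pos hx]
    ring_nf
  have h1 : IntegrableOn (fun w : ℝ => Real.exp (1/2 - |w|/9)) (Iic 0) := by
    rw [← Measure.map_neg_eq_self (volume : Measure ℝ)]
    have m : MeasurableEmbedding fun x : ℝ => -x := (Homeomorph.neg ℝ).measurableEmbedding
    rw [m.integrableOn_map_iff]
    simp_rw [Function.comp_def, abs_neg, neg_preimage, neg_Iic, neg_zero]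
    exact (integrableOn_Ici_iff_integrableOn_Ioi).mpr h0
  have h2 := h1.union h0
  rwa [Iic_union_Ioi, integrableOn_univ] at h2

lemma lapPhi_measurable : Measurable lapPhi := by
  unfold lapPhi; fun_prop

lemma sqrt_tendsto_atTop : Tendsto Real.sqrt atTop atTop := by
  apply Tendsto.congr' ?_ (tendsto_rpow_atTop (show (0:ℝ) < 1/2 by norm_num))
  filter_upwards [eventually_ge_atTop (0:ℝ)] with x hx
  exact (Real.sqrt_eq_rpow x).symm

lemma lapPhi_scaled_tendsto (w : ℝ) :
    Tendsto (fun l : ℝ => l * lapPhi (1 + w / Real.sqrt l)) atTop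
      (nhds (3/2 * w^2)) := by
  have h0 : Tendsto (fun l : ℝ => w / Real.sqrt l) atTop (nhds 0) :=
    tendsto_const_nhds.div_atTop sqrt_tendsto_atTop
  have hc : ContinuousAt (fun x : ℝ => w^2 * (2*(1+x) + 1) / (2*(1+x)^2)) 0 := by
    apply ContinuousAt.div (by fun_prop) (by fun_prop)
    norm_num
  have h1 := hc.tendsto.comp h0
  simp only [Function.comp_def] at h1
  norm_num at h1
  apply Tendsto.congr' ?_ ?_
  · exact fun l => w^2 * (2*(1+ w / Real.sqrt l) + 1) / (2*(1+ w / Real.sqrt l)^2)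
  swap
  · convert h1 using 2
    ring
  · filter_upwards [eventually_ge_atTop (max 1 (w^2+1))] with l hl
    have hl1 : (1:ℝ) ≤ l := le_trans (le_max_left _ _) hl
    have hl0 : (0:ℝ) < l := by linarith
    have hs0 : 0 < Real.sqrt l := Real.sqrt_pos.mpr hl0
    have hw : |w| < Real.sqrt l := by
      have : Real.sqrt (w^2) < Real.sqrt l :=
        Real.sqrt_lt_sqrt (sq_nonneg w) (by have := le_trans (le_max_right _ _) hl; linarith)
      rwa [Real.sqrt_sq_eq_abs] at this
    have hv0 : 0 < 1 + w / Real.sqrt l := by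
      have : -1 < w / Real.sqrt l := by
        rw [lt_div_iff₀ hs0]
        have := neg_abs_le w
        nlinarith
      linarith
    set s := Real.sqrt l with hsdef
    have hss : s ^ 2 = l := Real.sq_sqrt hl0.le
    have key : s^2 * (w/s)^2 = w^2 := by field_simp
    symm
    calc l * lapPhi (1 + w / s)
        = s^2 * (w/s)^2 * ((2*(1+w/s)+1) / (2*(1+w/s)^2)) := by
          rw [show l = s^2 from hss.symm]; unfold lapPhi
          rw [add_sub_cancel_left]; ring
      _ = w^2 * (2*(1+w/s)+1) / (2*(1+w/s)^2) := by rw [key]; ring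

lemma core_integral_tendsto :
    Tendsto
      (fun l : ℝ =>
        ∫ w : ℝ, (Ioi (-Real.sqrt l)).indicator
          (fun w => Real.exp (-(l * lapPhi (1 + w / Real.sqrt l)))) w)
      atTop (nhds (Real.sqrt (π / (3/2)))) := by
  have hgauss : (∫ w : ℝ, Real.exp (-(3/2) * w^2)) = Real.sqrt (π / (3/2)) :=
    integral_gaussian (3/2)
  rw [← hgauss]
  apply tendsto_integral_filter_of_dominated_convergence
    (fun w => Real.exp (1/2 - |w|/9))
  · -- measurability
    filter_upwards [eventually_ge_atTop (1:ℝ)] with l _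
    apply AEStronglyMeasurable.indicator ?_ measurableSet_Ioi
    apply Measurable.aestronglyMeasurable
    apply Measurable.exp
    apply Measurable.neg
    exact (lapPhi_measurable.comp (by fun_prop)).const_mul l
  · -- domination
    filter_upwards [eventually_ge_atTop (1:ℝ)] with l hl
    apply ae_of_all
    intro w
    rw [Real.norm_eq_abs]
    by_cases hw : w ∈ Ioi (-Real.sqrt l)
    · rw [indicator_of_mem hw]
      rw [abs_of_pos (Real.exp_pos _), Real.exp_le_exp]
      have := lapPhi_scaled_lb hl (mem_Ioi.mp hw)
      linarith
    · rw [indicator_of_notMem hw, abs_zero]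
      exact (Real.exp_pos _).le
  · exact integrable_dom
  · -- pointwise limit
    apply ae_of_all
    intro w
    have h1 := (lapPhi_scaled_tendsto w).neg
    have h2 := (Real.continuous_exp.tendsto _).comp h1
    simp only [Function.comp_def] at h2
    apply Tendsto.congr' ?_ (by
      convert h2 using 2
      ring_nf)
    filter_upwards [eventually_ge_atTop (w^2+1)] with l hl
    have hw : -Real.sqrt l < w := by
      have h0 : |w| < Real.sqrt l := by
        have : Real.sqrt (w^2) < Real.sqrt l :=
          Real.sqrt_lt_sqrt (sq_nonneg w) (by linarith)
        rwa [Real.sqrt_sq_eq_abs] at this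
      have := neg_abs_le w
      linarith
    rw [indicator_of_mem (mem_Ioi.mpr hw)]

lemma substitution_eq {l : ℝ} (hl : 1 ≤ l) :
    Real.sqrt l * ∫ v in Ioi (0:ℝ), Real.exp (-(l * lapPhi v)) =
      ∫ w : ℝ, (Ioi (-Real.sqrt l)).indicator
        (fun w => Real.exp (-(l * lapPhi (1 + w / Real.sqrt l)))) w := by
  have hl0 : (0:ℝ) < l := by linarith
  have hs0 : 0 < Real.sqrt l := Real.sqrt_pos.mpr hl0
  set s := Real.sqrt l with hsdef
  set f : ℝ → ℝ := fun v => Real.exp (-(l * lapPhi v)) with hf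
  rw [integral_indicator measurableSet_Ioi]
  have step1 : ∀ w : ℝ, f (1 + w / s) = (fun x => f (1 + x)) (s⁻¹ * w) := by
    intro w; simp [div_eq_inv_mul]
  calc s * ∫ v in Ioi (0:ℝ), f v
      = s * ∫ x in Ioi (-1:ℝ), f (1 + x) := by
        congr 1
        have hemb : MeasurableEmbedding (fun x : ℝ => x + 1) :=
          (Homeomorph.addRight (1:ℝ)).measurableEmbedding
        have := (measurePreserving_add_right (volume : Measure ℝ) 1).setIntegral_preimage_emb
          hemb f (Ioi 0)
        rw [show (fun x : ℝ => x + 1) ⁻¹' (Ioi 0) = Ioi (-1) by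
          ext x
          simp only [mem_preimage, mem_Ioi]
          constructor <;> intro h <;> linarith] at this
        rw [← this]
        apply setIntegral_congr_fun measurableSet_Ioi
        intro x _
        simp [add_comm]
    _ = ∫ w in Ioi (-s), f (1 + w / s) := by
        have h2 := integral_comp_mul_left_Ioi (fun x => f (1 + x)) (-s) (inv_pos.mpr hs0)
        simp only [smul_eq_mul, inv_inv] at h2
        rw [show s⁻¹ * (-s) = -1 by field_simp] at h2
        rw [← h2]
        apply setIntegral_congr_fun measurableSet_Ioi
        intro w _
        simp [div_eq_inv_mul]

lemma core_tendsto :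
    Tendsto (fun l : ℝ => Real.sqrt l * ∫ v in Ioi (0:ℝ), Real.exp (-(l * lapPhi v)))
      atTop (nhds (Real.sqrt (π / (3/2)))) := by
  apply Tendsto.congr' ?_ core_integral_tendsto
  filter_upwards [eventually_ge_atTop (1:ℝ)] with l hl
  exact (substitution_eq hl).symm

/-- For `a, b > 0`, as `t → ∞`,
`∫₀^∞ exp(-at/u² - bu) du ∼ √(π/3)·2^(2/3)·a^(1/6)·b^(-2/3)·t^(1/6)·exp(-3a^(1/3)b^(2/3)2^(-2/3)t^(1/3))`. -/
theorem laplace_asymptotic_exp_at_u_sq (a b : ℝ) (ha : 0 < a) (hb : 0 < b) :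
    Tendsto
      (fun t : ℝ =>
        (∫ u in Set.Ioi (0:ℝ), Real.exp (-(a * t) / u ^ 2 - b * u)) /
          (Real.sqrt (Real.pi / 3) * (2:ℝ) ^ ((2:ℝ)/3) * a ^ ((1:ℝ)/6) *
            b ^ (-(2:ℝ)/3) * t ^ ((1:ℝ)/6) *
            Real.exp (-3 * a ^ ((1:ℝ)/3) * b ^ ((2:ℝ)/3) * (2:ℝ) ^ (-(2:ℝ)/3) * t ^ ((1:ℝ)/3))))
      atTop (nhds 1) := by
  set c : ℝ := (2:ℝ)^((1:ℝ)/3) * a^((1:ℝ)/3) * b^(-((1:ℝ)/3)) with hcdef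
  have hc0 : 0 < c := by positivity
  have hc' : c = (2*a/b) ^ ((1:ℝ)/3) := by
    rw [hcdef, Real.div_rpow (by positivity) hb.le, Real.mul_rpow (by norm_num) ha.le,
      Real.rpow_neg hb.le, div_eq_mul_inv]
    ring
  have hL : Tendsto (fun t : ℝ => b * c * t ^ ((1:ℝ)/3)) atTop atTop :=
    (tendsto_rpow_atTop (by norm_num : (0:ℝ) < 1/3)).const_mul_atTop (by positivity)
  have hmain := (core_tendsto.comp hL).div_const (Real.sqrt (π / (3/2)))
  have hne : Real.sqrt (π / (3/2)) ≠ 0 := by positivity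
  rw [div_self hne] at hmain
  apply Tendsto.congr' ?_ hmain
  filter_upwards [eventually_gt_atTop (0:ℝ)] with t ht
  simp only [Function.comp_def]
  set U : ℝ := c * t ^ ((1:ℝ)/3) with hUdef
  have hU0 : 0 < U := by positivity
  set L : ℝ := b * c * t ^ ((1:ℝ)/3) with hLdef
  have hL0 : 0 < L := by positivity
  have hLU : L = b * U := by rw [hLdef, hUdef]; ring
  -- U^3 = (2a/b) t
  have hU3 : U^3 = (2*a/b) * t := by
    rw [hUdef, mul_pow, hc', ← Real.rpow_natCast ((2*a/b) ^ ((1:ℝ)/3)) 3,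
      ← Real.rpow_natCast (t ^ ((1:ℝ)/3)) 3,
      ← Real.rpow_mul (by positivity), ← Real.rpow_mul ht.le]
    norm_num
  have hat : a * t = b * U^3 / 2 := by
    rw [hU3]; field_simp
  -- numerator
  have hsub := integral_comp_mul_left_Ioi
    (fun u => Real.exp (-(a * t) / u ^ 2 - b * u)) 0 hU0
  rw [mul_zero] at hsub
  have hnum1 : (∫ u in Ioi (0:ℝ), Real.exp (-(a * t) / u ^ 2 - b * u)) =
      U * ∫ v in Ioi (0:ℝ), Real.exp (-(a * t) / (U * v) ^ 2 - b * (U * v)) := by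
    rw [hsub, smul_eq_mul, mul_inv_cancel_left₀ hU0.ne']
  have hnum2 : (∫ v in Ioi (0:ℝ), Real.exp (-(a * t) / (U * v) ^ 2 - b * (U * v))) =
      Real.exp (-(3/2 * L)) * ∫ v in Ioi (0:ℝ), Real.exp (-(L * lapPhi v)) := by
    rw [← integral_const_mul]
    apply setIntegral_congr_fun measurableSet_Ioi
    intro v hv
    have hv0 : (0:ℝ) < v := hv
    dsimp only
    rw [← Real.exp_add]
    congr 1
    rw [lapPhi_eq hv0.ne', hat, hLU]
    field_simp
    ring
  -- exponent identity
  have hexp : -(3/2 * L) =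
      -3 * a ^ ((1:ℝ)/3) * b ^ ((2:ℝ)/3) * (2:ℝ) ^ (-(2:ℝ)/3) * t ^ ((1:ℝ)/3) := by
    have h1 : b * b^(-((1:ℝ)/3)) = b^((2:ℝ)/3) := by
      nth_rewrite 1 [← Real.rpow_one b]
      rw [← Real.rpow_add hb]; norm_num
    have h2 : (2:ℝ)^((1:ℝ)/3) = 2 * (2:ℝ)^(-(2:ℝ)/3) := by
      rw [show (1:ℝ)/3 = 1 + (-(2:ℝ)/3) by norm_num,
        Real.rpow_add (by norm_num : (0:ℝ) < 2), Real.rpow_one]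
    rw [hLdef, hcdef,
      show b * ((2:ℝ)^((1:ℝ)/3) * a^((1:ℝ)/3) * b^(-((1:ℝ)/3))) * t^((1:ℝ)/3)
        = (b * b^(-((1:ℝ)/3))) * (2:ℝ)^((1:ℝ)/3) * a^((1:ℝ)/3) * t^((1:ℝ)/3) by ring, h1, h2]
    ring
  -- prefactor identity
  have hπ3 : (0:ℝ) ≤ π/3 := by positivity
  have key : U * Real.sqrt (π/(3/2)) =
      Real.sqrt L *
        (Real.sqrt (π/3) * (2:ℝ)^((2:ℝ)/3) * a^((1:ℝ)/6) * b^(-(2:ℝ)/3) * t^((1:ℝ)/6)) := by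
    rw [hUdef, hLdef]
    rw [show π/(3/2) = 2*(π/3) by ring, Real.sqrt_mul (by norm_num : (0:ℝ) ≤ 2),
      show b * c * t ^ ((1:ℝ)/3) = (b * c) * t ^ ((1:ℝ)/3) by ring,
      Real.sqrt_mul (by positivity : (0:ℝ) ≤ b * c),
      Real.sqrt_mul hb.le]
    rw [Real.sqrt_eq_rpow 2, Real.sqrt_eq_rpow b, Real.sqrt_eq_rpow c,
      Real.sqrt_eq_rpow (t ^ ((1:ℝ)/3))]
    rw [hcdef]
    rw [Real.mul_rpow (by positivity) (by positivity),
      Real.mul_rpow (by positivity) (by positivity)]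
    rw [← Real.rpow_mul ht.le, ← Real.rpow_mul (show (0:ℝ) ≤ 2 by norm_num),
      ← Real.rpow_mul ha.le, ← Real.rpow_mul hb.le]
    rw [Real.sqrt_eq_rpow (π/3)]
    simp only [Real.rpow_def_of_pos (show (0:ℝ) < 2 by norm_num), Real.rpow_def_of_pos ha,
      Real.rpow_def_of_pos hb, Real.rpow_def_of_pos ht,
      Real.rpow_def_of_pos (show (0:ℝ) < π/3 by positivity)]
    simp only [← Real.exp_add]
    rw [Real.exp_eq_exp]
    ring
  -- final algebra
  rw [hnum1, hnum2, ← hexp]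
  have hP0 : (0:ℝ) < Real.sqrt (π/3) * (2:ℝ)^((2:ℝ)/3) * a^((1:ℝ)/6) * b^(-(2:ℝ)/3)
      * t^((1:ℝ)/6) := by positivity
  have he0 : (0:ℝ) < Real.exp (-(3/2 * L)) := Real.exp_pos _
  rw [div_eq_div_iff (by positivity) (by positivity)]
  set F := ∫ v in Ioi (0:ℝ), Real.exp (-(L * lapPhi v))
  linear_combination (-(Real.exp (-(3/2 * L)) * F)) * key
end

section
/- Fix constants a > 0 and b > 0. As t → ∞, ∫₀^∞ u · exp(-a t/u² - b u) du is asymptotically equivalent to 2√(π/3) · a^{1/2} · b^{-1} · t^{1/2} · exp(-3 a^{1/3} b^{2/3} 2^{-2/3} t^{1/3}). -/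
open Real MeasureTheory Filter Set Topology

namespace LaplaceAux

noncomputable def g (l v : ℝ) : ℝ := v * Real.exp (-(l * (1/(2*v^2) + v - 3/2)))

noncomputable def F (l w : ℝ) : ℝ :=
  (Set.Ioi (0:ℝ)).indicator (g l) (1 + w / Real.sqrt l)

lemma g_meas (l : ℝ) : Measurable (g l) := by
  unfold g; fun_prop

lemma F_meas (l : ℝ) : Measurable (F l) := by
  unfold F
  exact ((g_meas l).indicator measurableSet_Ioi).comp
    ((measurable_id.div_const _).const_add 1)

lemma change (l : ℝ) (hl : 0 < l) :
    (∫ w : ℝ, F l w) = Real.sqrt l * ∫ v in Set.Ioi (0:ℝ), g l v := by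
  have hs : (0:ℝ) < Real.sqrt l := Real.sqrt_pos.mpr hl
  have h1 : ∀ w : ℝ, F l w
      = (fun x => (Set.Ioi (0:ℝ)).indicator (g l) ((Real.sqrt l)⁻¹ * x)) (w + Real.sqrt l) := by
    intro w
    unfold F
    congr 1
    field_simp
    ring
  calc (∫ w : ℝ, F l w)
      = ∫ w : ℝ, (fun x => (Set.Ioi (0:ℝ)).indicator (g l) ((Real.sqrt l)⁻¹ * x))
          (w + Real.sqrt l) := by simp_rw [h1]
    _ = ∫ w : ℝ, (Set.Ioi (0:ℝ)).indicator (g l) ((Real.sqrt l)⁻¹ * w) :=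
          (integral_add_right_eq_self (μ := volume)
            (fun x => (Set.Ioi (0:ℝ)).indicator (g l) ((Real.sqrt l)⁻¹ * x)) (Real.sqrt l))
    _ = |Real.sqrt l| • ∫ w : ℝ, (Set.Ioi (0:ℝ)).indicator (g l) w :=
          Measure.integral_comp_inv_mul_left _ _
    _ = Real.sqrt l * ∫ v in Set.Ioi (0:ℝ), g l v := by
          rw [integral_indicator measurableSet_Ioi, abs_of_pos hs, smul_eq_mul]

lemma F_eq {l w : ℝ} (hl : 0 < l) (hw : -Real.sqrt l < w) :
    F l w = (1 + w / Real.sqrt l) *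
      Real.exp (-(w^2 * (2*(w / Real.sqrt l)+3) / (2*(1+w / Real.sqrt l)^2))) := by
  have hs : (0:ℝ) < Real.sqrt l := Real.sqrt_pos.mpr hl
  have h1 : 0 < 1 + w / Real.sqrt l := by
    have : -1 < w / Real.sqrt l := by
      rw [lt_div_iff₀ hs]; linarith
    linarith
  have hne : (1 : ℝ) + w / Real.sqrt l ≠ 0 := ne_of_gt h1
  have hl0 : 0 < l := hl
  set s : ℝ := w / Real.sqrt l with hs_def
  have hw2 : w^2 = l * s^2 := by
    rw [hs_def, div_pow, Real.sq_sqrt hl0.le]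
    field_simp
  have hnes : (1:ℝ) + s ≠ 0 := hne
  unfold F g
  rw [Set.indicator_of_mem (Set.mem_Ioi.mpr h1)]
  congr 2
  rw [hw2]
  field_simp
  ring

lemma F_bound {l : ℝ} (hl : 1 ≤ l) (w : ℝ) :
    |F l w| ≤ 2 * Real.exp (-(1/2) * w^2) + 4 * Real.exp (-(1/4) * |w|) := by
  have hl0 : (0:ℝ) < l := lt_of_lt_of_le one_pos hl
  have hs : (0:ℝ) < Real.sqrt l := Real.sqrt_pos.mpr hl0
  have hs1 : (1:ℝ) ≤ Real.sqrt l := by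
    simpa using Real.sqrt_le_sqrt hl
  rcases le_or_gt w (-Real.sqrt l) with hw | hw
  · have : F l w = 0 := by
      unfold F
      apply Set.indicator_of_notMem
      simp only [Set.mem_Ioi, not_lt]
      have : w / Real.sqrt l ≤ -1 := by
        rw [div_le_iff₀ hs]; linarith
      linarith
    rw [this, abs_zero]
    positivity
  · rw [F_eq hl0 hw]
    set x := w / Real.sqrt l with hx
    have hx1 : -1 < x := by rw [hx, lt_div_iff₀ hs]; linarith
    have h1x : 0 < 1 + x := by linarith
    have hwx : w = x * Real.sqrt l := by rw [hx]; field_simp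
    rcases le_or_gt x 1 with hxle | hxgt
    · -- central region: bound by 2 exp(-w²/2)
      have harg : -(w^2 * (2*x+3) / (2*(1+x)^2)) ≤ -(1/2) * w^2 := by
        have hden : (0:ℝ) < 2*(1+x)^2 := by positivity
        have hstep : (1/2) * w^2 ≤ w^2 * (2*x+3) / (2*(1+x)^2) := by
          rw [le_div_iff₀ hden]
          have h2x : (0:ℝ) ≤ 2 - x^2 := by nlinarith
          nlinarith [mul_nonneg (sq_nonneg w) h2x]
        linarith
      have : (1 + x) * Real.exp (-(w^2 * (2*x+3) / (2*(1+x)^2)))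
          ≤ 2 * Real.exp (-(1/2) * w^2) := by
        apply mul_le_mul (by linarith) (Real.exp_le_exp.mpr harg) (Real.exp_nonneg _) (by norm_num)
      have hpos : (0:ℝ) ≤ 4 * Real.exp (-(1/4) * |w|) := by positivity
      calc |(1 + x) * Real.exp (-(w^2 * (2*x+3) / (2*(1+x)^2)))|
          = (1 + x) * Real.exp (-(w^2 * (2*x+3) / (2*(1+x)^2))) := by
            rw [abs_of_nonneg]; positivity
        _ ≤ 2 * Real.exp (-(1/2) * w^2) := this
        _ ≤ _ := by linarith
    · -- tail region: x > 1, so w ≥ √l ≥ 1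
      have hw1 : 1 < w := by nlinarith
      have hxw : x ≤ w := by
        rw [hx]
        calc w / Real.sqrt l ≤ w / 1 := by
              apply div_le_div_of_nonneg_left (by linarith) one_pos hs1
          _ = w := div_one w
      have harg : -(w^2 * (2*x+3) / (2*(1+x)^2)) ≤ -(1/2) * w := by
        have hden : (0:ℝ) < 2*(1+x)^2 := by positivity
        have hstep : (1/2) * w ≤ w^2 * (2*x+3) / (2*(1+x)^2) := by
          rw [le_div_iff₀ hden]
          have hw0 : (0:ℝ) < w := by linarith
          have hkey : (1+x)^2 ≤ w*(2*x+3) := by nlinarith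
          nlinarith [mul_le_mul_of_nonneg_left hkey hw0.le]
        linarith
      have h1w : (1:ℝ) + w ≤ 4 * Real.exp ((1/4) * w) := by
        have := Real.add_one_le_exp ((1/4) * w)
        nlinarith [Real.exp_pos ((1/4)*w)]
      have step1 : (1 + x) * Real.exp (-(w^2 * (2*x+3) / (2*(1+x)^2)))
          ≤ (1 + w) * Real.exp (-(1/2) * w) := by
        apply mul_le_mul (by linarith) (Real.exp_le_exp.mpr harg) (Real.exp_nonneg _)
          (by linarith)
      have step2 : (1 + w) * Real.exp (-(1/2) * w) ≤ 4 * Real.exp (-(1/4) * |w|) := by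
        rw [abs_of_pos (by linarith : (0:ℝ) < w)]
        calc (1 + w) * Real.exp (-(1/2) * w)
            ≤ (4 * Real.exp ((1/4) * w)) * Real.exp (-(1/2) * w) := by
              apply mul_le_mul_of_nonneg_right h1w (Real.exp_nonneg _)
          _ = 4 * Real.exp (-(1/4) * w) := by
              rw [mul_assoc, ← Real.exp_add]; ring_nf
      have hpos : (0:ℝ) ≤ 2 * Real.exp (-(1/2) * w^2) := by positivity
      calc |(1 + x) * Real.exp (-(w^2 * (2*x+3) / (2*(1+x)^2)))|
          = (1 + x) * Real.exp (-(w^2 * (2*x+3) / (2*(1+x)^2))) := by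
            rw [abs_of_nonneg]; positivity
        _ ≤ 4 * Real.exp (-(1/4) * |w|) := le_trans step1 step2
        _ ≤ _ := by linarith

lemma sqrt_tendsto : Tendsto Real.sqrt atTop atTop := by
  apply (tendsto_rpow_atTop (by norm_num : (0:ℝ) < 1/2)).congr'
  filter_upwards [eventually_ge_atTop (0:ℝ)] with x hx
  rw [Real.sqrt_eq_rpow]

lemma F_tendsto (w : ℝ) :
    Tendsto (fun l => F l w) atTop (𝓝 (Real.exp (-((3:ℝ)/2) * w^2))) := by
  have hs : Tendsto (fun l => w / Real.sqrt l) atTop (𝓝 0) :=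
    Tendsto.div_atTop tendsto_const_nhds sqrt_tendsto
  have hcont : ContinuousAt
      (fun x : ℝ => (1 + x) * Real.exp (-(w^2 * (2*x+3) / (2*(1+x)^2)))) 0 := by
    apply ContinuousAt.mul
    · fun_prop
    · apply Real.continuous_exp.continuousAt.comp
      apply ContinuousAt.neg
      apply ContinuousAt.div
      · fun_prop
      · fun_prop
      · norm_num
  have hφ := hcont.tendsto.comp hs
  have hval : (1 + (0:ℝ)) * Real.exp (-(w^2 * (2*(0:ℝ)+3) / (2*(1+(0:ℝ))^2)))
      = Real.exp (-((3:ℝ)/2) * w^2) := by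
    norm_num
    ring_nf
  rw [hval] at hφ
  apply hφ.congr'
  filter_upwards [eventually_ge_atTop (w^2 + 1)] with l hl
  have hl0 : (0:ℝ) < l := by nlinarith [sq_nonneg w]
  have hw : -Real.sqrt l < w := by
    have h1 : |w| < Real.sqrt l := by
      rw [← Real.sqrt_sq_eq_abs]
      apply Real.sqrt_lt_sqrt (sq_nonneg w)
      linarith
    cases abs_lt.mp h1 with
    | intro h2 h3 => linarith
  rw [F_eq hl0 hw]
  simp [Function.comp]

lemma exp_abs_integrable : Integrable (fun w : ℝ => Real.exp (-(1/4) * |w|)) := by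
  have hIoi : IntegrableOn (fun w : ℝ => Real.exp (-(1/4) * |w|)) (Set.Ioi 0) := by
    apply ((exp_neg_integrableOn_Ioi 0 (by norm_num : (0:ℝ) < 1/4)).congr_fun ?_
      measurableSet_Ioi)
    intro x hx
    simp [abs_of_pos (Set.mem_Ioi.mp hx)]
  have hind : Integrable ((Set.Ioi (0:ℝ)).indicator (fun w : ℝ => Real.exp (-(1/4) * |w|))) :=
    (integrable_indicator_iff measurableSet_Ioi).mpr hIoi
  have hneg := hind.comp_neg
  have hIio : IntegrableOn (fun w : ℝ => Real.exp (-(1/4) * |w|)) (Set.Iio 0) := by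
    rw [← integrable_indicator_iff measurableSet_Iio]
    apply hneg.congr
    apply Eventually.of_forall
    intro x
    by_cases hx : x < 0
    · have h1 : -x ∈ Set.Ioi (0:ℝ) := by simpa using hx
      simp only [Set.indicator_of_mem h1, Set.indicator_of_mem (Set.mem_Iio.mpr hx), abs_neg]
    · have h1 : -x ∉ Set.Ioi (0:ℝ) := by simpa using hx
      have h2 : x ∉ Set.Iio (0:ℝ) := by simpa using hx
      simp only [Set.indicator_of_notMem h1, Set.indicator_of_notMem h2]
  have hIic : IntegrableOn (fun w : ℝ => Real.exp (-(1/4) * |w|)) (Set.Iic 0) :=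
    Iff.mpr integrableOn_Iic_iff_integrableOn_Iio hIio
  have := hIic.union hIoi
  rwa [Set.Iic_union_Ioi, integrableOn_univ] at this

lemma bound_integrable :
    Integrable (fun w : ℝ => 2 * Real.exp (-(1/2) * w^2) + 4 * Real.exp (-(1/4) * |w|)) := by
  apply Integrable.add
  · exact (integrable_exp_neg_mul_sq (by norm_num : (0:ℝ) < 1/2)).const_mul 2
  · exact exp_abs_integrable.const_mul 4

lemma tendsto_F_integral :
    Tendsto (fun l => ∫ w : ℝ, F l w) atTop (𝓝 (Real.sqrt (2 * π / 3))) := by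
  have hgauss : (∫ w : ℝ, Real.exp (-((3:ℝ)/2) * w^2)) = Real.sqrt (2 * π / 3) := by
    rw [integral_gaussian]
    congr 1
    ring
  rw [← hgauss]
  apply tendsto_integral_filter_of_dominated_convergence
      (fun w : ℝ => 2 * Real.exp (-(1/2) * w^2) + 4 * Real.exp (-(1/4) * |w|))
  · exact Eventually.of_forall fun l => (F_meas l).aestronglyMeasurable
  · filter_upwards [eventually_ge_atTop (1:ℝ)] with l hl
    exact Eventually.of_forall fun w => F_bound hl w
  · exact bound_integrable
  · exact Eventually.of_forall fun w => F_tendsto w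

theorem key : Tendsto (fun l : ℝ => Real.sqrt l * ∫ v in Set.Ioi (0:ℝ), g l v)
    atTop (𝓝 (Real.sqrt (2 * π / 3))) := by
  apply tendsto_F_integral.congr'
  filter_upwards [eventually_gt_atTop (0:ℝ)] with l hl
  exact change l hl

end LaplaceAux

/-- For `a, b > 0`, as `t → ∞`,
`∫₀^∞ u·exp(-at/u² - bu) du ∼ 2√(π/3)·a^(1/2)·b⁻¹·t^(1/2)·exp(-3a^(1/3)b^(2/3)2^(-2/3)t^(1/3))`. -/
theorem laplace_asymptotic_u_exp_at_u_sq (a b : ℝ) (ha : 0 < a) (hb : 0 < b) :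
    Tendsto
      (fun t : ℝ =>
        (∫ u in Set.Ioi (0:ℝ), u * Real.exp (-(a * t) / u ^ 2 - b * u)) /
          (2 * Real.sqrt (Real.pi / 3) * a ^ ((1:ℝ)/2) * b⁻¹ * t ^ ((1:ℝ)/2) *
            Real.exp (-3 * a ^ ((1:ℝ)/3) * b ^ ((2:ℝ)/3) * (2:ℝ) ^ (-(2:ℝ)/3) * t ^ ((1:ℝ)/3))))
      atTop (nhds 1) := by
  have hc : (0:ℝ) < Real.sqrt (2 * π / 3) := Real.sqrt_pos.mpr (by positivity)
  have hLtend : Tendsto (fun t : ℝ => b * (2*a*t/b) ^ ((1:ℝ)/3)) atTop atTop := by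
    apply Tendsto.const_mul_atTop hb
    apply (tendsto_rpow_atTop (by norm_num : (0:ℝ) < 1/3)).comp
    apply Tendsto.atTop_div_const hb
    exact Tendsto.const_mul_atTop (by positivity : (0:ℝ) < 2*a) tendsto_id
  have hmain := (LaplaceAux.key.comp hLtend).div_const (Real.sqrt (2 * π / 3))
  rw [div_self hc.ne'] at hmain
  apply hmain.congr'
  filter_upwards [eventually_gt_atTop (0:ℝ)] with t ht
  simp only [Function.comp_apply]
  set U : ℝ := (2*a*t/b) ^ ((1:ℝ)/3) with hU_def
  set L : ℝ := b * U with hL_def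
  have hX : (0:ℝ) < 2*a*t/b := by positivity
  have hU : 0 < U := Real.rpow_pos_of_pos hX _
  have hL : 0 < L := mul_pos hb hU
  have hU3 : U ^ (3:ℕ) = 2*a*t/b := by
    rw [hU_def, ← Real.rpow_natCast ((2*a*t/b) ^ ((1:ℝ)/3)) 3, ← Real.rpow_mul hX.le]
    norm_num
  have hat : a * t = b * U^3 / 2 := by
    rw [hU3]
    field_simp
  -- numerator
  have hN : (∫ u in Set.Ioi (0:ℝ), u * Real.exp (-(a * t) / u ^ 2 - b * u))
      = U^2 * Real.exp (-(3/2) * L) * ∫ v in Set.Ioi (0:ℝ), LaplaceAux.g L v := by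
    have hcv := integral_comp_mul_left_Ioi
      (fun u => u * Real.exp (-(a * t) / u ^ 2 - b * u)) 0 hU
    rw [mul_zero] at hcv
    have hN2 : (∫ u in Set.Ioi (0:ℝ), u * Real.exp (-(a * t) / u ^ 2 - b * u))
        = U * ∫ x in Set.Ioi (0:ℝ),
            (U * x) * Real.exp (-(a * t) / (U * x) ^ 2 - b * (U * x)) := by
      rw [hcv, smul_eq_mul, ← mul_assoc, mul_inv_cancel₀ hU.ne', one_mul]
    rw [hN2]
    have hpt : ∀ x ∈ Set.Ioi (0:ℝ),
        (U * x) * Real.exp (-(a * t) / (U * x) ^ 2 - b * (U * x))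
        = (U * Real.exp (-(3/2) * L)) * LaplaceAux.g L x := by
      intro x hx
      have hx0 : x ≠ 0 := ne_of_gt (Set.mem_Ioi.mp hx)
      have hE : -(a * t) / (U * x) ^ 2 - b * (U * x)
          = (-(3/2) * L) + (-(L * (1/(2*x^2) + x - 3/2))) := by
        rw [hat, hL_def]
        field_simp
        ring
      unfold LaplaceAux.g
      rw [hE, Real.exp_add]
      ring
    rw [setIntegral_congr_fun measurableSet_Ioi hpt, integral_const_mul]
    ring
  -- denominator
  have hexp : Real.exp (-3 * a ^ ((1:ℝ)/3) * b ^ ((2:ℝ)/3) * (2:ℝ) ^ (-(2:ℝ)/3) * t ^ ((1:ℝ)/3))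
      = Real.exp (-(3/2) * L) := by
    congr 1
    rw [hL_def, hU_def, div_rpow (by positivity) hb.le, mul_rpow (by positivity) ht.le,
      mul_rpow (by norm_num) ha.le]
    have h2 : (2:ℝ) ^ ((1:ℝ)/3) = 2 * (2:ℝ) ^ (-(2:ℝ)/3) := by
      rw [show (1:ℝ)/3 = 1 + -(2:ℝ)/3 by norm_num, Real.rpow_add two_pos, Real.rpow_one]
    have hb23 : b ^ ((2:ℝ)/3) = b / b ^ ((1:ℝ)/3) := by
      rw [show (2:ℝ)/3 = 1 - (1:ℝ)/3 by norm_num, Real.rpow_sub hb, Real.rpow_one]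
    rw [h2, hb23]
    have hbr : b ^ ((1:ℝ)/3) ≠ 0 := ne_of_gt (Real.rpow_pos_of_pos hb _)
    field_simp
  have halg : 2 * Real.sqrt (π/3) * a ^ ((1:ℝ)/2) * b⁻¹ * t ^ ((1:ℝ)/2)
      = U^2 * (Real.sqrt (2 * π / 3) / Real.sqrt L) := by
    have hL1 : 0 ≤ 2 * Real.sqrt (π/3) * a ^ ((1:ℝ)/2) * b⁻¹ * t ^ ((1:ℝ)/2) := by positivity
    have hL2 : 0 ≤ U^2 * (Real.sqrt (2 * π / 3) / Real.sqrt L) := by positivity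
    have ha2 : (a ^ ((1:ℝ)/2))^2 = a := by
      rw [← Real.rpow_natCast (a ^ ((1:ℝ)/2)) 2, ← Real.rpow_mul ha.le]
      norm_num
    have ht2 : (t ^ ((1:ℝ)/2))^2 = t := by
      rw [← Real.rpow_natCast (t ^ ((1:ℝ)/2)) 2, ← Real.rpow_mul ht.le]
      norm_num
    have hsq : (2 * Real.sqrt (π/3) * a ^ ((1:ℝ)/2) * b⁻¹ * t ^ ((1:ℝ)/2))^2
        = (U^2 * (Real.sqrt (2 * π / 3) / Real.sqrt L))^2 := by
      have e1 : (Real.sqrt (π/3))^2 = π/3 := Real.sq_sqrt (by positivity)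
      have e2 : (Real.sqrt (2 * π / 3))^2 = 2 * π / 3 := Real.sq_sqrt (by positivity)
      have e3 : (Real.sqrt L)^2 = L := Real.sq_sqrt hL.le
      have e4 : U^4 = (2*a*t/b) * U := by
        rw [show U^4 = U^(3:ℕ) * U by ring, hU3]
      have lhs_eq : (2 * Real.sqrt (π/3) * a ^ ((1:ℝ)/2) * b⁻¹ * t ^ ((1:ℝ)/2))^2
          = 4 * (π/3) * a * b⁻¹^2 * t := by
        rw [mul_pow, mul_pow, mul_pow, mul_pow, e1, ha2, ht2]
        ring
      have rhs_eq : (U^2 * (Real.sqrt (2 * π / 3) / Real.sqrt L))^2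
          = (U^2)^2 * ((2 * π / 3) / L) := by
        rw [mul_pow, div_pow, e2, e3]
      rw [lhs_eq, rhs_eq, hL_def, show (U^2)^2 = U^4 by ring, e4]
      field_simp
      ring
    exact (sq_eq_sq₀ hL1 hL2).mp hsq
  have hDval : 2 * Real.sqrt (π/3) * a ^ ((1:ℝ)/2) * b⁻¹ * t ^ ((1:ℝ)/2) *
        Real.exp (-3 * a ^ ((1:ℝ)/3) * b ^ ((2:ℝ)/3) * (2:ℝ) ^ (-(2:ℝ)/3) * t ^ ((1:ℝ)/3))
      = (U^2 * Real.exp (-(3/2) * L)) * (Real.sqrt (2 * π / 3) / Real.sqrt L) := by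
    rw [halg, hexp]
    ring
  rw [hN, hDval, show U^2 * Real.exp (-(3/2) * L) * (∫ v in Set.Ioi (0:ℝ), LaplaceAux.g L v)
      = (U^2 * Real.exp (-(3/2) * L)) * ∫ v in Set.Ioi (0:ℝ), LaplaceAux.g L v from rfl,
    mul_div_mul_left _ _ (by positivity : U^2 * Real.exp (-(3/2) * L) ≠ 0),
    div_div_eq_mul_div]
  ring
end

section
/- Let ξ be a positive random variable (with a density) and c > 0 such that log P[ξ ≤ x] / |log x| → -c/2 as x → 0⁺. Then log E[exp(-λξ)] / log λ → -c/2 as λ → ∞. -/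
open Real MeasureTheory Filter ProbabilityTheory

set_option maxHeartbeats 1000000 in
/-- If a positive random variable `ξ` (with a density) satisfies
`log P[ξ ≤ x] / |log x| → -c/2` as `x → 0⁺`, then
`log E[exp(-λξ)] / log λ → -c/2` as `λ → ∞`. -/
theorem log_laplace_transform_decay {Ω : Type*} [MeasureSpace Ω]
    (P : Measure Ω) [IsProbabilityMeasure P] (ξ : Ω → ℝ) (c : ℝ) (hc : 0 < c)
    (hξpos : ∀ ω, 0 < ξ ω) (hpdf : HasPDF ξ P)
    (hcdf : Tendsto (fun x : ℝ => Real.log (P {ω | ξ ω ≤ x}).toReal / |Real.log x|)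
      (nhdsWithin 0 (Set.Ioi 0)) (nhds (-c / 2))) :
    Tendsto (fun l : ℝ => Real.log (∫ ω, Real.exp (-l * ξ ω) ∂P) / Real.log l)
      atTop (nhds (-c / 2)) := by
  have hae : AEMeasurable ξ P := HasPDF.aemeasurable ξ P volume
  set g : Ω → ℝ := hae.mk ξ with hgdef
  have hgm : Measurable g := hae.measurable_mk
  have hgae : ξ =ᵐ[P] g := hae.ae_eq_mk
  have hgpos : ∀ᵐ ω ∂P, 0 < g ω := hgae.mono fun ω h => h ▸ hξpos ω
  set F : ℝ → ℝ := fun x => (P {ω | g ω ≤ x}).toReal with hFdef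
  have hFeq : ∀ x, (P {ω | ξ ω ≤ x}).toReal = F x := by
    intro x
    have : {ω | ξ ω ≤ x} =ᵐ[P] {ω | g ω ≤ x} := by
      apply eventuallyEq_set.2
      filter_upwards [hgae] with ω h
      simp [Set.mem_setOf_eq, h]
    rw [measure_congr this]
  have hFnonneg : ∀ x, 0 ≤ F x := fun x => ENNReal.toReal_nonneg
  have hsm : ∀ x : ℝ, MeasurableSet {ω | g ω ≤ x} := fun x =>
    hgm measurableSet_Iic
  have hInt : ∀ l : ℝ, 0 ≤ l → Integrable (fun ω => Real.exp (-l * g ω)) P := by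
    intro l hl
    apply Integrable.mono' (integrable_const (1 : ℝ))
    · exact ((hgm.const_mul (-l)).exp).aestronglyMeasurable
    · filter_upwards [hgpos] with ω h0
      rw [Real.norm_eq_abs, abs_of_pos (Real.exp_pos _)]
      exact Real.exp_le_one_iff.2 (mul_nonpos_of_nonpos_of_nonneg (neg_nonpos.2 hl) h0.le)
  have hAeq : ∀ l : ℝ, ∫ ω, Real.exp (-l * ξ ω) ∂P = ∫ ω, Real.exp (-l * g ω) ∂P := by
    intro l
    exact integral_congr_ae (hgae.mono fun ω h => by simp only [h])
  have hApos : ∀ l : ℝ, 0 ≤ l → 0 < ∫ ω, Real.exp (-l * g ω) ∂P := by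
    intro l hl
    rw [integral_pos_iff_support_of_nonneg (fun ω => (Real.exp_pos _).le) (hInt l hl)]
    have : Function.support (fun ω => Real.exp (-l * g ω)) = Set.univ := by
      ext ω; simp [Function.mem_support, (Real.exp_pos _).ne']
    rw [this]
    simp
  -- lower bound
  have hlow : ∀ l : ℝ, 0 ≤ l → ∀ x : ℝ,
      Real.exp (-l * x) * F x ≤ ∫ ω, Real.exp (-l * g ω) ∂P := by
    intro l hl x
    have h1 : Real.exp (-l * x) * F x = ∫ _ω in {ω | g ω ≤ x}, Real.exp (-l * x) ∂P := by
      rw [setIntegral_const, smul_eq_mul, mul_comm]; rfl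
    rw [h1]
    calc ∫ _ω in {ω | g ω ≤ x}, Real.exp (-l * x) ∂P
        ≤ ∫ ω in {ω | g ω ≤ x}, Real.exp (-l * g ω) ∂P := by
          apply setIntegral_mono_on (integrable_const _).integrableOn
            (hInt l hl).integrableOn (hsm x)
          intro ω hω
          apply Real.exp_le_exp.2
          rw [neg_mul, neg_mul, neg_le_neg_iff]
          exact mul_le_mul_of_nonneg_left hω hl
      _ ≤ ∫ ω, Real.exp (-l * g ω) ∂P :=
          setIntegral_le_integral (hInt l hl) (ae_of_all _ fun ω => (Real.exp_pos _).le)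
  -- upper bound
  have hupp : ∀ l : ℝ, 0 ≤ l → ∀ x : ℝ,
      (∫ ω, Real.exp (-l * g ω) ∂P) ≤ F x + Real.exp (-l * x) := by
    intro l hl x
    have hsplit := integral_add_compl (hsm x) (hInt l hl)
    rw [← hsplit]
    have hle1 : ∫ ω in {ω | g ω ≤ x}, Real.exp (-l * g ω) ∂P ≤ F x := by
      calc ∫ ω in {ω | g ω ≤ x}, Real.exp (-l * g ω) ∂P
          ≤ ∫ _ω in {ω | g ω ≤ x}, (1 : ℝ) ∂P := by
            apply setIntegral_mono_ae (hInt l hl).integrableOn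
              (integrable_const _).integrableOn
            filter_upwards [hgpos] with ω h0
            exact Real.exp_le_one_iff.2 (mul_nonpos_of_nonpos_of_nonneg (neg_nonpos.2 hl) h0.le)
        _ = F x := by rw [setIntegral_const, smul_eq_mul, mul_one]; rfl
    have hle2 : ∫ ω in {ω | g ω ≤ x}ᶜ, Real.exp (-l * g ω) ∂P ≤ Real.exp (-l * x) := by
      calc ∫ ω in {ω | g ω ≤ x}ᶜ, Real.exp (-l * g ω) ∂P
          ≤ ∫ _ω in {ω | g ω ≤ x}ᶜ, Real.exp (-l * x) ∂P := by
            apply setIntegral_mono_on (hInt l hl).integrableOn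
              (integrable_const _).integrableOn (hsm x).compl
            intro ω hω
            apply Real.exp_le_exp.2
            rw [neg_mul, neg_mul, neg_le_neg_iff]
            have : x < g ω := lt_of_not_ge hω
            exact mul_le_mul_of_nonneg_left this.le hl
        _ = (P {ω | g ω ≤ x}ᶜ).toReal * Real.exp (-l * x) := by
            rw [setIntegral_const, smul_eq_mul]; rfl
        _ ≤ 1 * Real.exp (-l * x) := by
            apply mul_le_mul_of_nonneg_right _ (Real.exp_pos _).le
            exact ENNReal.toReal_le_of_le_ofReal one_pos.le (by simpa using prob_le_one)
        _ = Real.exp (-l * x) := one_mul _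
    linarith
  -- rewritten cdf hypothesis
  have hcdf' : Tendsto (fun x : ℝ => Real.log (F x) / |Real.log x|)
      (nhdsWithin 0 (Set.Ioi 0)) (nhds (-c / 2)) := by
    simp only [hFeq] at hcdf; exact hcdf
  -- main argument
  rw [Metric.tendsto_nhds]
  intro ε hε
  set ε' : ℝ := min ε c / 4 with hε'def
  have hε'pos : 0 < ε' := by positivity
  have hε'ε : ε' ≤ ε / 4 := by
    simp only [hε'def]; gcongr; exact min_le_left _ _
  have hε'c : ε' ≤ c / 4 := by
    simp only [hε'def]; gcongr; exact min_le_right _ _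
  -- get δ from hcdf'
  have hev : ∀ᶠ x in nhdsWithin (0:ℝ) (Set.Ioi 0),
      |Real.log (F x) / |Real.log x| - (-c / 2)| < ε' := by
    have := Metric.tendsto_nhds.1 hcdf' ε' hε'pos
    simpa [Real.dist_eq] using this
  obtain ⟨δ₀, hδ₀pos, hδ₀⟩ := mem_nhdsGT_iff_exists_Ioo_subset.1 hev
  set δ : ℝ := min δ₀ 1 with hδdef
  have hδpos : 0 < δ := lt_min hδ₀pos one_pos
  have hδ1 : δ ≤ 1 := min_le_right _ _
  -- key estimates for x ∈ Ioo 0 δ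
  have hkey : ∀ x ∈ Set.Ioo (0:ℝ) δ, 0 < F x ∧
      F x ≤ x ^ (c/2 - ε') ∧ x ^ (c/2 + ε') ≤ F x := by
    intro x hx
    have hx0 : 0 < x := hx.1
    have hx1 : x < 1 := lt_of_lt_of_le hx.2 hδ1
    have hxδ₀ : x ∈ Set.Ioo 0 δ₀ := ⟨hx0, lt_of_lt_of_le hx.2 (min_le_left _ _)⟩
    have hbound := hδ₀ hxδ₀
    simp only [Set.mem_setOf_eq] at hbound
    have hlogx : Real.log x < 0 := Real.log_neg hx0 hx1
    have habs : |Real.log x| = -Real.log x := abs_of_neg hlogx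
    rw [habs] at hbound
    have hlogxne : -Real.log x > 0 := by linarith
    have hq := abs_lt.1 hbound
    -- log F x bounds
    have hFub : Real.log (F x) < (c/2 - ε') * Real.log x := by
      have h1 : Real.log (F x) / (-Real.log x) < -c/2 + ε' := by linarith [hq.2]
      have := (div_lt_iff₀ hlogxne).1 h1
      nlinarith
    have hFlb : (c/2 + ε') * Real.log x < Real.log (F x) := by
      have h1 : -c/2 - ε' < Real.log (F x) / (-Real.log x) := by linarith [hq.1]
      have := (lt_div_iff₀ hlogxne).1 h1
      nlinarith
    have hexp_neg : (c/2 - ε') * Real.log x < 0 :=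
      mul_neg_of_pos_of_neg (by linarith) hlogx
    have hFne : F x ≠ 0 := by
      intro h
      rw [h, Real.log_zero] at hFub
      linarith
    have hFpos : 0 < F x := lt_of_le_of_ne (hFnonneg x) (Ne.symm hFne)
    refine ⟨hFpos, ?_, ?_⟩
    · rw [Real.rpow_def_of_pos hx0, mul_comm]
      calc F x = Real.exp (Real.log (F x)) := (Real.exp_log hFpos).symm
        _ ≤ Real.exp ((c/2 - ε') * Real.log x) := Real.exp_le_exp.2 hFub.le
    · rw [Real.rpow_def_of_pos hx0, mul_comm]
      calc Real.exp ((c/2 + ε') * Real.log x) ≤ Real.exp (Real.log (F x)) :=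
            Real.exp_le_exp.2 hFlb.le
        _ = F x := Real.exp_log hFpos
  -- parameters
  set η : ℝ := ε' / c with hηdef
  have hηpos : 0 < η := div_pos hε'pos hc
  have hη14 : η ≤ 1/4 := by
    rw [hηdef, div_le_iff₀ hc]; linarith
  set q : ℝ := (1 - η) * (c/2 - ε') with hqdef
  have hqpos : 0 < q := by
    apply mul_pos <;> nlinarith
  have hqlb : c/2 - (3/2) * ε' ≤ q := by
    have h1 : η * (c/2 - ε') ≤ η * (c/2) := by nlinarith
    have h2 : η * (c/2) = ε'/2 := by rw [hηdef]; field_simp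
    nlinarith
  -- eventual facts
  have h1 : ∀ᶠ l : ℝ in atTop, 1 < l := eventually_gt_atTop 1
  have h2 : ∀ᶠ l : ℝ in atTop, 1/δ < l := eventually_gt_atTop _
  have h3 : ∀ᶠ l : ℝ in atTop, l ^ (η - 1) < δ := by
    have hneg : (0:ℝ) < 1 - η := by linarith
    have := tendsto_rpow_neg_atTop hneg
    have h := this.eventually_lt_const hδpos
    simpa [neg_sub] using h
  have h4 : ∀ᶠ l : ℝ in atTop, max (4/ε) (4 * Real.log 2 / ε) ≤ Real.log l :=
    Real.tendsto_log_atTop.eventually_ge_atTop _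
  have h5 : ∀ᶠ l : ℝ in atTop, q * Real.log l ≤ l ^ η := by
    have hlo := (isLittleO_log_rpow_atTop hηpos).def (show (0:ℝ) < 1/q by positivity)
    filter_upwards [hlo, eventually_gt_atTop 1] with l hl hl1
    have hlog : 0 ≤ Real.log l := Real.log_nonneg hl1.le
    have hrp : 0 ≤ l ^ η := Real.rpow_nonneg (by linarith) η
    rw [Real.norm_eq_abs, Real.norm_eq_abs, abs_of_nonneg hlog, abs_of_nonneg hrp] at hl
    calc q * Real.log l ≤ q * (1/q * l ^ η) := by
          apply mul_le_mul_of_nonneg_left hl hqpos.le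
      _ = l ^ η := by field_simp
  filter_upwards [h1, h2, h3, h4, h5] with l hl1 hl2 hl3 hl4 hl5
  have hl0 : (0:ℝ) < l := lt_trans one_pos hl1
  have hL : 0 < Real.log l := Real.log_pos hl1
  set L := Real.log l with hLdef
  have hLε : 4/ε ≤ L := le_trans (le_max_left _ _) hl4
  have hLε2 : 4 * Real.log 2 / ε ≤ L := le_trans (le_max_right _ _) hl4
  set A := ∫ ω, Real.exp (-l * ξ ω) ∂P with hAdef
  have hAg : A = ∫ ω, Real.exp (-l * g ω) ∂P := hAeq l
  have hA0 : 0 < A := hAg ▸ hApos l hl0.le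
  -- lower bound on log A
  have hx1mem : (1/l) ∈ Set.Ioo (0:ℝ) δ := by
    constructor
    · positivity
    · rw [div_lt_iff₀ hl0]
      rw [div_lt_iff₀ hδpos] at hl2
      linarith
  obtain ⟨hF1pos, _, hF1lb⟩ := hkey (1/l) hx1mem
  have hlowA : Real.exp (-1) * (1/l) ^ (c/2 + ε') ≤ A := by
    rw [hAg]
    calc Real.exp (-1) * (1/l) ^ (c/2 + ε')
        ≤ Real.exp (-1) * F (1/l) := by
          apply mul_le_mul_of_nonneg_left hF1lb (Real.exp_pos _).le
      _ = Real.exp (-l * (1/l)) * F (1/l) := by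
          rw [show -l * (1/l) = -1 by field_simp]
      _ ≤ _ := hlow l hl0.le (1/l)
  have hlogA_lb : -1 - (c/2 + ε') * L ≤ Real.log A := by
    have h := Real.log_le_log (by positivity) hlowA
    rw [Real.log_mul (Real.exp_pos _).ne' (by positivity), Real.log_exp,
      Real.log_rpow (by positivity), one_div, Real.log_inv] at h
    calc -1 - (c/2 + ε') * L = -1 + (c/2 + ε') * -L := by ring
      _ ≤ Real.log A := by rw [← hLdef] at h; linarith
  -- upper bound on log A
  set x₂ : ℝ := l ^ (η - 1) with hx2def
  have hx2pos : 0 < x₂ := Real.rpow_pos_of_pos hl0 _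
  have hx2mem : x₂ ∈ Set.Ioo (0:ℝ) δ := ⟨hx2pos, hl3⟩
  obtain ⟨_, hF2ub, _⟩ := hkey x₂ hx2mem
  have hF2 : F x₂ ≤ l ^ (-q) := by
    calc F x₂ ≤ x₂ ^ (c/2 - ε') := hF2ub
      _ = l ^ ((η - 1) * (c/2 - ε')) := by
          rw [hx2def, ← Real.rpow_mul hl0.le]
      _ = l ^ (-q) := by rw [hqdef]; ring_nf
  have hlx2 : l * x₂ = l ^ η := by
    rw [hx2def]
    calc l * l ^ (η - 1) = l ^ (1:ℝ) * l ^ (η - 1) := by rw [Real.rpow_one]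
      _ = l ^ (1 + (η - 1)) := (Real.rpow_add hl0 _ _).symm
      _ = l ^ η := by ring_nf
  have hexp2 : Real.exp (-l * x₂) ≤ l ^ (-q) := by
    rw [neg_mul, hlx2]
    calc Real.exp (-(l ^ η)) ≤ Real.exp (-(q * L)) :=
          Real.exp_le_exp.2 (by linarith [hl5])
      _ = l ^ (-q) := by
          rw [Real.rpow_def_of_pos hl0, ← hLdef]
          congr 1
          ring
  have huppA : A ≤ 2 * l ^ (-q) := by
    rw [hAg]
    calc ∫ ω, Real.exp (-l * g ω) ∂P ≤ F x₂ + Real.exp (-l * x₂) := hupp l hl0.le x₂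
      _ ≤ l ^ (-q) + l ^ (-q) := add_le_add hF2 hexp2
      _ = 2 * l ^ (-q) := by ring
  have hlogA_ub : Real.log A ≤ Real.log 2 - q * L := by
    have h := Real.log_le_log hA0 huppA
    rw [Real.log_mul two_ne_zero (by positivity), Real.log_rpow hl0, ← hLdef] at h
    linarith
  -- conclude
  rw [Real.dist_eq, abs_lt]
  have hlog2pos : 0 < Real.log 2 := Real.log_pos one_lt_two
  have h1L : 1 / L ≤ ε / 4 := by
    rw [div_le_div_iff₀ hL (by norm_num : (0:ℝ) < 4)]
    rw [div_le_iff₀ hε] at hLε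
    linarith [mul_comm L ε]
  have h2L : Real.log 2 / L ≤ ε / 4 := by
    rw [div_le_div_iff₀ hL (by norm_num : (0:ℝ) < 4)]
    rw [div_le_iff₀ hε] at hLε2
    linarith [mul_comm L ε]
  constructor
  · have h := (div_le_div_iff_of_pos_right hL).2 hlogA_lb
    have hdiv : (-1 - (c/2 + ε') * L) / L = -(1/L) - (c/2 + ε') := by
      rw [sub_div, mul_div_cancel_right₀ _ hL.ne', neg_div]
    rw [hdiv] at h
    linarith
  · have h := (div_le_div_iff_of_pos_right hL).2 hlogA_ub
    have hdiv : (Real.log 2 - q * L) / L = Real.log 2 / L - q := by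
      rw [sub_div, mul_div_cancel_right₀ _ hL.ne']
    rw [hdiv] at h
    linarith
end

section
/- Let C > 0 and ε ∈ (0,1), and suppose K > 0 satisfies u^{-C(1+ε)} ≤ G(u) ≤ u^{-C(1-ε)} for all u ≥ K, where G(u) = P[τ > u] is the survival function of a positive random variable τ. Then there exist constants A, B > 0 such that for all sufficiently large t, A·t^{-C(1+ε)/2} ≤ ∫_K^{√(t/M)} exp(-π²t/(8u²)) · (πt/u³) · G(u) du ≤ B·t^{-C(1-ε)/2} + exp(-c₀ t) for some c₀ > 0 and any fixed M > 0 (with t large enough that K < √(t/M)). -/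
open Real MeasureTheory intervalIntegral

private lemma tdib_rpow_exp_le (p x : ℝ) (hp : 0 ≤ p) (hx : 0 ≤ x) :
    x ^ p * Real.exp (-x) ≤ (Nat.ceil p).factorial := by
  have hfac : (1:ℝ) ≤ (Nat.ceil p).factorial := by exact_mod_cast (Nat.ceil p).factorial_pos
  have h1 : x ^ p ≤ (Nat.ceil p).factorial * Real.exp x := by
    rcases le_or_gt x 1 with h | h
    · calc x ^ p ≤ 1 := Real.rpow_le_one hx h hp
        _ ≤ (Nat.ceil p).factorial * Real.exp x := by
          nlinarith [Real.one_le_exp hx]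
    · calc x ^ p ≤ x ^ ((Nat.ceil p : ℝ)) :=
            Real.rpow_le_rpow_of_exponent_le h.le (Nat.le_ceil p)
      _ = x ^ (Nat.ceil p) := Real.rpow_natCast x _
      _ ≤ (Nat.ceil p).factorial * Real.exp x := by
          have := Real.pow_div_factorial_le_exp (x := x) (le_trans zero_le_one h.le) (Nat.ceil p)
          rw [div_le_iff₀ (by exact_mod_cast (Nat.ceil p).factorial_pos)] at this
          linarith
  calc x ^ p * Real.exp (-x) ≤ ((Nat.ceil p).factorial * Real.exp x) * Real.exp (-x) :=
        mul_le_mul_of_nonneg_right h1 (Real.exp_pos _).le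
    _ = (Nat.ceil p).factorial := by
        rw [mul_assoc, ← Real.exp_add]
        simp

private lemma tdib_integrable (G : ℝ → ℝ) (hGanti : Antitone G) (t a c : ℝ)
    (ha : 0 < a) (hac : a ≤ c) :
    IntervalIntegrable
      (fun u => Real.exp (-(Real.pi ^ 2 * t) / (8 * u ^ 2)) * (Real.pi * t / u ^ 3) * G u)
      volume a c := by
  have hcont : ContinuousOn
      (fun u : ℝ => Real.exp (-(Real.pi ^ 2 * t) / (8 * u ^ 2)) * (Real.pi * t / u ^ 3))
      (Set.uIcc a c) := by
    have hsub : ∀ u ∈ Set.uIcc a c, u ≠ 0 := by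
      rw [Set.uIcc_of_le hac]
      intro u hu
      exact (lt_of_lt_of_le ha hu.1).ne'
    apply ContinuousOn.mul
    · apply Real.continuous_exp.comp_continuousOn
      apply ContinuousOn.div continuousOn_const (by fun_prop)
      intro u hu
      exact mul_ne_zero (by norm_num) (pow_ne_zero 2 (hsub u hu))
    · apply ContinuousOn.div continuousOn_const (by fun_prop)
      intro u hu
      exact pow_ne_zero 3 (hsub u hu)
  exact hGanti.intervalIntegrable.continuousOn_mul hcont

private lemma tdib_hasDerivAt (t u : ℝ) (hu : u ≠ 0) :
    HasDerivAt (fun u : ℝ => Real.exp (-(Real.pi ^ 2 * t) / (16 * u ^ 2)))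
      (Real.exp (-(Real.pi ^ 2 * t) / (16 * u ^ 2)) * (Real.pi ^ 2 * t / (8 * u ^ 3))) u := by
  have hden : HasDerivAt (fun u : ℝ => 16 * u ^ 2) (16 * (2 * u)) u := by
    simpa using (hasDerivAt_pow 2 u).const_mul (16:ℝ)
  have hne : (16 : ℝ) * u ^ 2 ≠ 0 := mul_ne_zero (by norm_num) (pow_ne_zero 2 hu)
  have h1 := (hasDerivAt_const u (-(Real.pi ^ 2 * t))).div hden hne
  have h2 : HasDerivAt (fun u : ℝ => -(Real.pi ^ 2 * t) / (16 * u ^ 2))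
      (Real.pi ^ 2 * t / (8 * u ^ 3)) u := by
    refine h1.congr_deriv ?_
    field_simp
    ring
  simpa using h2.exp

private lemma tdib_key (β t u : ℝ) (hβ : 0 < β) (ht : 0 < t) (hu : 0 < u) :
    Real.exp (-(Real.pi ^ 2 * t) / (16 * u ^ 2)) * u ^ (-β) ≤
      ((16 / Real.pi ^ 2) ^ (β / 2) * (Nat.ceil (β / 2)).factorial) * t ^ (-(β / 2)) := by
  have hπ : (0:ℝ) < Real.pi ^ 2 := by positivity
  set x := Real.pi ^ 2 * t / (16 * u ^ 2) with hxdef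
  have hx : 0 < x := by positivity
  have h1 := tdib_rpow_exp_le (β / 2) x (by positivity) hx.le
  have hbase : x * (16 / Real.pi ^ 2) = t / u ^ 2 := by
    rw [hxdef]; field_simp
  have h2 : x ^ (β / 2) * (16 / Real.pi ^ 2) ^ (β / 2) = (t / u ^ 2) ^ (β / 2) := by
    rw [← Real.mul_rpow hx.le (by positivity), hbase]
  have h4 : ((u:ℝ) ^ 2) ^ (-(β / 2)) = u ^ (-β) := by
    rw [← Real.rpow_natCast u 2, ← Real.rpow_mul hu.le]
    congr 1
    push_cast
    ring
  have h3 : (t / u ^ 2) ^ (β / 2) = t ^ (β / 2) * u ^ (-β) := by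
    rw [Real.div_rpow ht.le (by positivity), div_eq_mul_inv,
      ← Real.rpow_neg (by positivity), h4]
  have h5 : t ^ (β / 2) * t ^ (-(β / 2)) = 1 := by
    rw [← Real.rpow_add ht]; norm_num
  have hthis : x ^ (β / 2) * (16 / Real.pi ^ 2) ^ (β / 2) = t ^ (β / 2) * u ^ (-β) :=
    h2.trans h3
  have hu_eq : u ^ (-β) = x ^ (β / 2) * ((16 / Real.pi ^ 2) ^ (β / 2) * t ^ (-(β / 2))) := by
    calc u ^ (-β) = (t ^ (β / 2) * t ^ (-(β / 2))) * u ^ (-β) := by rw [h5, one_mul]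
      _ = (t ^ (β / 2) * u ^ (-β)) * t ^ (-(β / 2)) := by ring
      _ = (x ^ (β / 2) * (16 / Real.pi ^ 2) ^ (β / 2)) * t ^ (-(β / 2)) := by rw [← hthis]
      _ = _ := by ring
  have hexp_eq : -(Real.pi ^ 2 * t) / (16 * u ^ 2) = -x := by
    rw [hxdef]; ring
  calc Real.exp (-(Real.pi ^ 2 * t) / (16 * u ^ 2)) * u ^ (-β)
      = (x ^ (β / 2) * Real.exp (-x)) * ((16 / Real.pi ^ 2) ^ (β / 2) * t ^ (-(β / 2))) := by
        rw [hexp_eq, hu_eq]; ring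
    _ ≤ (Nat.ceil (β / 2)).factorial * ((16 / Real.pi ^ 2) ^ (β / 2) * t ^ (-(β / 2))) :=
        mul_le_mul_of_nonneg_right h1 (by positivity)
    _ = ((16 / Real.pi ^ 2) ^ (β / 2) * (Nat.ceil (β / 2)).factorial) * t ^ (-(β / 2)) := by ring

set_option maxHeartbeats 1000000 in
/-- If the survival function `G` of a positive random variable satisfies
`u^(-C(1+ε)) ≤ G(u) ≤ u^(-C(1-ε))` for `u ≥ K`, then for each fixed `M > 0`
there are `A, B, c₀ > 0` such that, for all sufficiently large `t` (with `K < √(t/M)`),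
`A t^(-C(1+ε)/2) ≤ ∫_K^{√(t/M)} exp(-π²t/(8u²)) (πt/u³) G(u) du ≤ B t^(-C(1-ε)/2) + exp(-c₀ t)`. -/
theorem twisted_domain_integral_bounds (C ε K : ℝ) (hC : 0 < C) (hε : 0 < ε) (hε1 : ε < 1)
    (hK : 0 < K) (G : ℝ → ℝ) (hGanti : Antitone G) (hG01 : ∀ u, 0 ≤ G u ∧ G u ≤ 1)
    (hG : ∀ u : ℝ, K ≤ u →
      u ^ (-(C * (1 + ε))) ≤ G u ∧ G u ≤ u ^ (-(C * (1 - ε)))) (M : ℝ) (hM : 0 < M) :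
    ∃ A > (0:ℝ), ∃ B > (0:ℝ), ∃ c₀ > (0:ℝ), ∃ t₀ : ℝ, ∀ t : ℝ, t₀ ≤ t →
      K < Real.sqrt (t / M) →
        A * t ^ (-(C * (1 + ε)) / 2) ≤
            (∫ u in K..Real.sqrt (t / M),
              Real.exp (-(Real.pi ^ 2 * t) / (8 * u ^ 2)) * (Real.pi * t / u ^ 3) * G u) ∧
          (∫ u in K..Real.sqrt (t / M),
              Real.exp (-(Real.pi ^ 2 * t) / (8 * u ^ 2)) * (Real.pi * t / u ^ 3) * G u) ≤
            B * t ^ (-(C * (1 - ε)) / 2) + Real.exp (-c₀ * t) := by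
  have hπ := Real.pi_pos
  set αp := C * (1 + ε) with hαp
  set β := C * (1 - ε) with hβdef
  have hαp0 : 0 < αp := mul_pos hC (by linarith)
  have hβ0 : 0 < β := mul_pos hC (by linarith)
  set c₁ := Real.pi ^ 2 / (32 * K ^ 2) with hc₁
  have hc₁0 : 0 < c₁ := div_pos (by positivity) (by positivity)
  set A := Real.exp (-(Real.pi ^ 2 * M) / 2) * Real.pi / 2 * (M * M ^ (αp / 2)) with hAdef
  have hA0 : 0 < A :=
    mul_pos (by positivity) (mul_pos hM (Real.rpow_pos_of_pos hM _))
  set B := (8 / Real.pi) * ((16 / Real.pi ^ 2) ^ (β / 2) * (Nat.ceil (β / 2)).factorial)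
    with hBdef
  have hB0 : 0 < B := by
    apply mul_pos (by positivity)
    apply mul_pos (Real.rpow_pos_of_pos (by positivity) _)
    exact_mod_cast (Nat.ceil (β / 2)).factorial_pos
  refine ⟨A, hA0, B, hB0, c₁ / 4, by positivity, ?_⟩
  have hev : ∀ᶠ t : ℝ in Filter.atTop,
      (1 ≤ t ∧ 4 * K ^ 2 * M ≤ t) ∧
        (Real.pi / K ^ 2) * (2 / c₁) ≤ Real.exp (c₁ / 4 * t) := by
    have h1 : Filter.Tendsto (fun t : ℝ => Real.exp (c₁ / 4 * t)) Filter.atTop Filter.atTop :=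
      Real.tendsto_exp_atTop.comp
        (Filter.Tendsto.const_mul_atTop (by positivity) Filter.tendsto_id)
    filter_upwards [Filter.eventually_ge_atTop (1:ℝ), Filter.eventually_ge_atTop (4 * K ^ 2 * M),
      h1.eventually_ge_atTop ((Real.pi / K ^ 2) * (2 / c₁))] with t h1 h2 h3
    exact ⟨⟨h1, h2⟩, h3⟩
  rw [Filter.eventually_atTop] at hev
  obtain ⟨t₀, ht₀⟩ := hev
  refine ⟨t₀, fun t ht hKb => ?_⟩
  obtain ⟨⟨ht1, ht4⟩, htexp⟩ := ht₀ t ht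
  have ht0 : (0:ℝ) < t := lt_of_lt_of_le one_pos ht1
  set b := Real.sqrt (t / M) with hbdef
  have hb0 : 0 < b := lt_trans hK hKb
  have hbsq : b ^ 2 = t / M := Real.sq_sqrt (by positivity)
  have hMb : M * b ^ 2 = t := by rw [hbsq]; field_simp
  have h2Kb : 2 * K ≤ b := by
    have h : (2 * K) ^ 2 ≤ t / M := by
      rw [le_div_iff₀ hM]; nlinarith
    calc 2 * K = Real.sqrt ((2 * K) ^ 2) := (Real.sqrt_sq (by positivity)).symm
      _ ≤ b := Real.sqrt_le_sqrt h
  have hKb2 : K ≤ b / 2 := by linarith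
  have hf_nonneg : ∀ u : ℝ, 0 < u →
      0 ≤ Real.exp (-(Real.pi ^ 2 * t) / (8 * u ^ 2)) * (Real.pi * t / u ^ 3) * G u := by
    intro u hu
    exact mul_nonneg (mul_nonneg (Real.exp_pos _).le
      (div_nonneg (by positivity) (pow_nonneg hu.le 3))) (hG01 u).1
  constructor
  · -- LOWER BOUND
    have hI1 := tdib_integrable G hGanti t K (b / 2) hK hKb2
    have hI2 := tdib_integrable G hGanti t (b / 2) b (by linarith) (by linarith)
    have hsplit := integral_add_adjacent_intervals hI1 hI2
    have hpos1 : 0 ≤ ∫ u in K..(b / 2),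
        Real.exp (-(Real.pi ^ 2 * t) / (8 * u ^ 2)) * (Real.pi * t / u ^ 3) * G u :=
      intervalIntegral.integral_nonneg hKb2 fun u hu => hf_nonneg u (lt_of_lt_of_le hK hu.1)
    set m : ℝ := Real.exp (-(Real.pi ^ 2 * M) / 2) * (Real.pi * t / b ^ 3) * b ^ (-αp) with hmdef
    have hmono : ∫ u in (b / 2)..b, m ≤ ∫ u in (b / 2)..b,
        Real.exp (-(Real.pi ^ 2 * t) / (8 * u ^ 2)) * (Real.pi * t / u ^ 3) * G u := by
      apply intervalIntegral.integral_mono_on (by linarith) intervalIntegrable_const hI2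
      rintro u ⟨hul, hur⟩
      have hu0 : 0 < u := lt_of_lt_of_le (by linarith) hul
      have hKu : K ≤ u := le_trans hKb2 hul
      have e1 : Real.exp (-(Real.pi ^ 2 * M) / 2) ≤
          Real.exp (-(Real.pi ^ 2 * t) / (8 * u ^ 2)) := by
        apply Real.exp_le_exp.mpr
        rw [neg_div, neg_div]
        apply neg_le_neg
        have hub : b ^ 2 ≤ 4 * u ^ 2 := by
          nlinarith [sq_nonneg (u - b / 2), mul_le_mul_of_nonneg_left hul hb0.le]
        have husq : t ≤ 4 * M * u ^ 2 := by
          linarith [mul_le_mul_of_nonneg_left hub hM.le, hMb]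
        have h2 : Real.pi ^ 2 * t / (8 * u ^ 2) ≤
            Real.pi ^ 2 * (4 * M * u ^ 2) / (8 * u ^ 2) :=
          (div_le_div_iff_of_pos_right (mul_pos (by norm_num) (pow_pos hu0 2))).mpr
            (mul_le_mul_of_nonneg_left husq (sq_nonneg Real.pi))
        have h3 : Real.pi ^ 2 * (4 * M * u ^ 2) / (8 * u ^ 2) = Real.pi ^ 2 * M / 2 := by
          field_simp [hu0.ne']
          ring
        linarith
      have e2 : Real.pi * t / b ^ 3 ≤ Real.pi * t / u ^ 3 :=
        div_le_div_of_nonneg_left (by positivity) (pow_pos hu0 3)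
          (pow_le_pow_left₀ hu0.le hur 3)
      have e3 : b ^ (-αp) ≤ G u :=
        le_trans (Real.rpow_le_rpow_of_nonpos hu0 hur (by linarith)) (hG u hKu).1
      rw [hmdef]
      exact mul_le_mul (mul_le_mul e1 e2
          (div_nonneg (by positivity) (pow_nonneg hb0.le 3)) (Real.exp_pos _).le) e3
        (Real.rpow_nonneg hb0.le _)
        (mul_nonneg (Real.exp_pos _).le (div_nonneg (by positivity) (pow_nonneg hu0.le 3)))
    have hconst : ∫ u in (b / 2)..b, m = (b - b / 2) * m := by
      rw [intervalIntegral.integral_const, smul_eq_mul]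
    have hbr1 : b ^ (-αp) = (t / M) ^ (-(αp / 2)) := by
      rw [hbdef, Real.sqrt_eq_rpow, ← Real.rpow_mul (by positivity : (0:ℝ) ≤ t / M)]
      congr 1; ring
    have hbr2 : (t / M : ℝ) ^ (-(αp / 2)) = t ^ (-(αp / 2)) * M ^ (αp / 2) := by
      rw [Real.rpow_neg (by positivity), Real.div_rpow ht0.le hM.le, Real.rpow_neg ht0.le,
        inv_div, div_eq_inv_mul]
    have hval : (b - b / 2) * m = A * t ^ (-αp / 2) := by
      have hb3 : b ^ 3 = (t / M) * b := by rw [← hbsq]; ring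
      rw [hmdef, hbr1, hbr2, hb3, hAdef]
      rw [show -αp / 2 = -(αp / 2) by ring]
      field_simp
      ring
    calc A * t ^ (-αp / 2) = (b - b / 2) * m := hval.symm
      _ = ∫ u in (b / 2)..b, m := hconst.symm
      _ ≤ ∫ u in (b / 2)..b,
          Real.exp (-(Real.pi ^ 2 * t) / (8 * u ^ 2)) * (Real.pi * t / u ^ 3) * G u := hmono
      _ ≤ ∫ u in K..b,
          Real.exp (-(Real.pi ^ 2 * t) / (8 * u ^ 2)) * (Real.pi * t / u ^ 3) * G u := by
        rw [← hsplit]; linarith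
  · -- UPPER BOUND
    have hIa := tdib_integrable G hGanti t K (2 * K) hK (by linarith)
    have hIb := tdib_integrable G hGanti t (2 * K) b (by linarith) h2Kb
    have hsplit := integral_add_adjacent_intervals hIa hIb
    -- piece 1
    have hp1 : ∫ u in K..(2 * K),
        Real.exp (-(Real.pi ^ 2 * t) / (8 * u ^ 2)) * (Real.pi * t / u ^ 3) * G u ≤
        ∫ u in K..(2 * K), (Real.exp (-c₁ * t) * (Real.pi * t / K ^ 3)) := by
      apply intervalIntegral.integral_mono_on (by linarith) hIa intervalIntegrable_const
      rintro u ⟨hul, hur⟩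
      have hu0 : 0 < u := lt_of_lt_of_le hK hul
      have e1 : Real.exp (-(Real.pi ^ 2 * t) / (8 * u ^ 2)) ≤ Real.exp (-c₁ * t) := by
        apply Real.exp_le_exp.mpr
        have h8 : 8 * u ^ 2 ≤ 32 * K ^ 2 := by nlinarith
        have hd := div_le_div_of_nonneg_left (show (0:ℝ) ≤ Real.pi ^ 2 * t by positivity)
          (mul_pos (by norm_num) (pow_pos hu0 2)) h8
        have heq : -c₁ * t = -(Real.pi ^ 2 * t / (32 * K ^ 2)) := by
          rw [hc₁]; ring
        rw [heq, neg_div]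
        exact neg_le_neg hd
      have e2 : Real.pi * t / u ^ 3 ≤ Real.pi * t / K ^ 3 :=
        div_le_div_of_nonneg_left (by positivity) (pow_pos hK 3) (pow_le_pow_left₀ hK.le hul 3)
      calc Real.exp (-(Real.pi ^ 2 * t) / (8 * u ^ 2)) * (Real.pi * t / u ^ 3) * G u
          ≤ (Real.exp (-c₁ * t) * (Real.pi * t / K ^ 3)) * 1 :=
            mul_le_mul (mul_le_mul e1 e2
                (div_nonneg (by positivity) (pow_nonneg hu0.le 3)) (Real.exp_pos _).le)
              (hG01 u).2 (hG01 u).1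
              (mul_nonneg (Real.exp_pos _).le
                (div_nonneg (by positivity) (pow_nonneg hK.le 3)))
        _ = Real.exp (-c₁ * t) * (Real.pi * t / K ^ 3) := mul_one _
    have hp1c : ∫ u in K..(2 * K), (Real.exp (-c₁ * t) * (Real.pi * t / K ^ 3))
        = K * (Real.exp (-c₁ * t) * (Real.pi * t / K ^ 3)) := by
      rw [intervalIntegral.integral_const, smul_eq_mul]
      ring
    have hp1'' : K * (Real.exp (-c₁ * t) * (Real.pi * t / K ^ 3)) ≤
        Real.exp (-(c₁ / 4) * t) := by
      have ht2 : t ≤ 2 / c₁ * Real.exp (c₁ / 2 * t) := by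
        rw [div_mul_eq_mul_div, le_div_iff₀ hc₁0]
        nlinarith [Real.add_one_le_exp (c₁ / 2 * t)]
      have key : K * (Real.exp (-c₁ * t) * (Real.pi * t / K ^ 3))
          = (Real.pi / K ^ 2) * t * Real.exp (-c₁ * t) := by
        field_simp [hK.ne']
      rw [key]
      calc (Real.pi / K ^ 2) * t * Real.exp (-c₁ * t)
          ≤ (Real.pi / K ^ 2) * (2 / c₁ * Real.exp (c₁ / 2 * t)) * Real.exp (-c₁ * t) :=
            mul_le_mul_of_nonneg_right
              (mul_le_mul_of_nonneg_left ht2 (by positivity)) (Real.exp_pos _).le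
        _ = ((Real.pi / K ^ 2) * (2 / c₁)) * (Real.exp (c₁ / 2 * t) * Real.exp (-c₁ * t)) := by
            ring
        _ = ((Real.pi / K ^ 2) * (2 / c₁)) * Real.exp (-(c₁ / 2) * t) := by
            rw [← Real.exp_add]; congr 2; ring
        _ ≤ Real.exp (c₁ / 4 * t) * Real.exp (-(c₁ / 2) * t) :=
            mul_le_mul_of_nonneg_right htexp (Real.exp_pos _).le
        _ = Real.exp (-(c₁ / 4) * t) := by rw [← Real.exp_add]; congr 1; ring
    -- piece 2
    have h2K0 : (0:ℝ) < 2 * K := by linarith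
    have hgcont : ContinuousOn
        (fun u : ℝ => Real.exp (-(Real.pi ^ 2 * t) / (16 * u ^ 2)) *
          (Real.pi ^ 2 * t / (8 * u ^ 3)))
        (Set.uIcc (2 * K) b) := by
      have hsub : ∀ u ∈ Set.uIcc (2 * K) b, u ≠ 0 := by
        rw [Set.uIcc_of_le h2Kb]
        intro u hu
        exact (lt_of_lt_of_le h2K0 hu.1).ne'
      apply ContinuousOn.mul
      · apply Real.continuous_exp.comp_continuousOn
        apply ContinuousOn.div continuousOn_const (by fun_prop)
        intro u hu
        exact mul_ne_zero (by norm_num) (pow_ne_zero 2 (hsub u hu))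
      · apply ContinuousOn.div continuousOn_const (by fun_prop)
        intro u hu
        exact mul_ne_zero (by norm_num) (pow_ne_zero 3 (hsub u hu))
    have hgint : IntervalIntegrable
        (fun u : ℝ => Real.exp (-(Real.pi ^ 2 * t) / (16 * u ^ 2)) *
          (Real.pi ^ 2 * t / (8 * u ^ 3)))
        volume (2 * K) b := hgcont.intervalIntegrable
    set C₂ : ℝ := (16 / Real.pi ^ 2) ^ (β / 2) * (Nat.ceil (β / 2)).factorial with hC₂def
    have hC₂0 : 0 < C₂ := by
      apply mul_pos (Real.rpow_pos_of_pos (by positivity) _)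
      exact_mod_cast (Nat.ceil (β / 2)).factorial_pos
    set cc : ℝ := C₂ * t ^ (-(β / 2)) * (8 / Real.pi) with hccdef
    have hcc0 : 0 ≤ cc :=
      mul_nonneg (mul_nonneg hC₂0.le (Real.rpow_pos_of_pos ht0 _).le) (by positivity)
    have hp2 : ∫ u in (2 * K)..b,
        Real.exp (-(Real.pi ^ 2 * t) / (8 * u ^ 2)) * (Real.pi * t / u ^ 3) * G u ≤
        ∫ u in (2 * K)..b, cc *
          (Real.exp (-(Real.pi ^ 2 * t) / (16 * u ^ 2)) * (Real.pi ^ 2 * t / (8 * u ^ 3))) := by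
      apply intervalIntegral.integral_mono_on h2Kb hIb (hgint.const_mul cc)
      rintro u ⟨hul, hur⟩
      have hu0 : 0 < u := lt_of_lt_of_le h2K0 hul
      have hKu : K ≤ u := by linarith
      have hsplitexp : Real.exp (-(Real.pi ^ 2 * t) / (8 * u ^ 2)) =
          Real.exp (-(Real.pi ^ 2 * t) / (16 * u ^ 2)) *
            Real.exp (-(Real.pi ^ 2 * t) / (16 * u ^ 2)) := by
        rw [← Real.exp_add]
        congr 1
        field_simp [hu0.ne']
        ring
      have hpnn : 0 ≤ Real.pi * t / u ^ 3 :=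
        div_nonneg (by positivity) (pow_nonneg hu0.le 3)
      calc Real.exp (-(Real.pi ^ 2 * t) / (8 * u ^ 2)) * (Real.pi * t / u ^ 3) * G u
          ≤ Real.exp (-(Real.pi ^ 2 * t) / (8 * u ^ 2)) * (Real.pi * t / u ^ 3) * u ^ (-β) :=
            mul_le_mul_of_nonneg_left (hG u hKu).2
              (mul_nonneg (Real.exp_pos _).le hpnn)
        _ = (Real.exp (-(Real.pi ^ 2 * t) / (16 * u ^ 2)) * u ^ (-β)) *
            (Real.exp (-(Real.pi ^ 2 * t) / (16 * u ^ 2)) * (Real.pi * t / u ^ 3)) := by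
            rw [hsplitexp]; ring
        _ ≤ (C₂ * t ^ (-(β / 2))) *
            (Real.exp (-(Real.pi ^ 2 * t) / (16 * u ^ 2)) * (Real.pi * t / u ^ 3)) := by
            apply mul_le_mul_of_nonneg_right _ (mul_nonneg (Real.exp_pos _).le hpnn)
            rw [hC₂def]
            exact tdib_key β t u hβ0 ht0 hu0
        _ = cc * (Real.exp (-(Real.pi ^ 2 * t) / (16 * u ^ 2)) *
            (Real.pi ^ 2 * t / (8 * u ^ 3))) := by
            rw [hccdef]
            field_simp [hu0.ne']
    have heval : ∫ u in (2 * K)..b,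
        (Real.exp (-(Real.pi ^ 2 * t) / (16 * u ^ 2)) * (Real.pi ^ 2 * t / (8 * u ^ 3)))
        = Real.exp (-(Real.pi ^ 2 * t) / (16 * b ^ 2))
          - Real.exp (-(Real.pi ^ 2 * t) / (16 * (2 * K) ^ 2)) := by
      apply intervalIntegral.integral_eq_sub_of_hasDerivAt
        (f := fun u : ℝ => Real.exp (-(Real.pi ^ 2 * t) / (16 * u ^ 2)))
      · intro u hu
        rw [Set.uIcc_of_le h2Kb] at hu
        exact tdib_hasDerivAt t u (lt_of_lt_of_le h2K0 hu.1).ne'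
      · exact hgint
    have hdiff : Real.exp (-(Real.pi ^ 2 * t) / (16 * b ^ 2))
        - Real.exp (-(Real.pi ^ 2 * t) / (16 * (2 * K) ^ 2)) ≤ 1 := by
      have h1 : Real.exp (-(Real.pi ^ 2 * t) / (16 * b ^ 2)) ≤ 1 := by
        apply Real.exp_le_one_iff.mpr
        exact div_nonpos_of_nonpos_of_nonneg (neg_nonpos.mpr (by positivity)) (by positivity)
      linarith [Real.exp_pos (-(Real.pi ^ 2 * t) / (16 * (2 * K) ^ 2))]
    have hp2' : ∫ u in (2 * K)..b, cc *
          (Real.exp (-(Real.pi ^ 2 * t) / (16 * u ^ 2)) * (Real.pi ^ 2 * t / (8 * u ^ 3)))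
        ≤ B * t ^ (-β / 2) := by
      rw [intervalIntegral.integral_const_mul, heval]
      calc cc * (Real.exp (-(Real.pi ^ 2 * t) / (16 * b ^ 2))
            - Real.exp (-(Real.pi ^ 2 * t) / (16 * (2 * K) ^ 2)))
          ≤ cc * 1 := mul_le_mul_of_nonneg_left hdiff hcc0
        _ = B * t ^ (-β / 2) := by
            rw [mul_one, hccdef, hBdef, hC₂def, show -β / 2 = -(β / 2) from by ring]
            ring
    calc (∫ u in K..b,
          Real.exp (-(Real.pi ^ 2 * t) / (8 * u ^ 2)) * (Real.pi * t / u ^ 3) * G u)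
        = (∫ u in K..(2 * K),
            Real.exp (-(Real.pi ^ 2 * t) / (8 * u ^ 2)) * (Real.pi * t / u ^ 3) * G u)
          + ∫ u in (2 * K)..b,
            Real.exp (-(Real.pi ^ 2 * t) / (8 * u ^ 2)) * (Real.pi * t / u ^ 3) * G u :=
          hsplit.symm
      _ ≤ Real.exp (-(c₁ / 4) * t) + B * t ^ (-β / 2) := by
          have h1 := (hp1.trans (le_of_eq hp1c)).trans hp1''
          have h2 := hp2.trans hp2'
          linarith
      _ = B * t ^ (-β / 2) + Real.exp (-(c₁ / 4) * t) := by ring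
end

section
/- For Brownian-time Brownian motion Z¹_t = z + X(|Y_t|) and any domain D ⊂ ℝⁿ, the exit time satisfies the identity P_z[τ_D(Z¹) > t] = P[η_{(-τ_D(z), τ_D(z))} > t], where τ_D(z) = inf{s ≥ 0 : X_s + z ∉ D} is the exit time of X started at z from D and η_I is the exit time of Y from the interval I. -/
open MeasureTheory ProbabilityTheory Filter Real

/-- A standard one-dimensional Brownian motion started at `0`: continuous paths,
Gaussian increments of variance `t - s`, and independent increments. -/
def IsBrownianMotion {Ω : Type*} [MeasurableSpace Ω] (P : Measure Ω)
    (Y : ℝ → Ω → ℝ) : Prop :=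
  (∀ ω, Y 0 ω = 0) ∧
  (∀ ω, Continuous fun t => Y t ω) ∧
  (∀ t, Measurable (Y t)) ∧
  (∀ s t : ℝ, 0 ≤ s → s ≤ t →
    Measure.map (fun ω => Y t ω - Y s ω) P = gaussianReal 0 ((t - s).toNNReal)) ∧
  (∀ (n : ℕ) (τ : ℕ → ℝ), (∀ i, 0 ≤ τ i) → Monotone τ →
    iIndepFun
      (fun i : Fin n => fun ω => Y (τ (i + 1)) ω - Y (τ i) ω) P)

/-- An `n`-dimensional Brownian motion started at `0`: the coordinate processes are
independent one-dimensional Brownian motions. -/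
def IsBrownianMotionRn {Ω : Type*} [MeasurableSpace Ω] (P : Measure Ω) (n : ℕ)
    (X : ℝ → Ω → (Fin n → ℝ)) : Prop :=
  (∀ i : Fin n, IsBrownianMotion P (fun t ω => X t ω i)) ∧
  iIndepFun
    (fun (i : Fin n) (ω : Ω) => (fun t : ℝ => X t ω i)) P

/-- First exit time of the path `t ↦ Z t ω` from a set `A`. -/
noncomputable def exitTime {Ω α : Type*} (Z : ℝ → Ω → α) (A : Set α) (ω : Ω) : ℝ :=
  sInf {t : ℝ | 0 ≤ t ∧ Z t ω ∉ A}


theorem path_exit_eq {α : Type*} [TopologicalSpace α] (f : ℝ → α) (g : ℝ → ℝ)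
    (hf : Continuous f) (hg : Continuous g) (hg0 : g 0 = 0)
    (D : Set α) (hD : IsOpen D) (hf0 : f 0 ∈ D) :
    sInf {s : ℝ | 0 ≤ s ∧ f (|g s|) ∉ D} =
      sInf {s : ℝ | 0 ≤ s ∧ g s ∉ Set.Ioo (-(sInf {r : ℝ | 0 ≤ r ∧ f r ∉ D}))
        (sInf {r : ℝ | 0 ≤ r ∧ f r ∉ D})} := by
  set S : Set ℝ := {r : ℝ | 0 ≤ r ∧ f r ∉ D} with hS
  set τ : ℝ := sInf S with hτ
  by_cases hSne : S.Nonempty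
  · have hSclosed : IsClosed S := by
      have : S = Set.Ici 0 ∩ f ⁻¹' Dᶜ := by ext r; exact Iff.rfl
      rw [this]
      exact isClosed_Ici.inter (hD.isClosed_compl.preimage hf)
    have hSbdd : BddBelow S := ⟨0, fun r hr => hr.1⟩
    have hτmem : τ ∈ S := hSclosed.csInf_mem hSne hSbdd
    have hτ0 : 0 ≤ τ := hτmem.1
    have hτpos : 0 < τ := by
      rcases hτ0.lt_or_eq with h | h
      · exact h
      · exfalso; exact hτmem.2 (h ▸ hf0)
    have hin : ∀ r, 0 ≤ r → r < τ → f r ∈ D := by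
      intro r hr0 hrτ
      by_contra hnot
      exact absurd (csInf_le hSbdd ⟨hr0, hnot⟩) (not_le.mpr hrτ)
    set B : Set ℝ := {s : ℝ | 0 ≤ s ∧ g s ∉ Set.Ioo (-τ) τ} with hB
    set A : Set ℝ := {s : ℝ | 0 ≤ s ∧ f (|g s|) ∉ D} with hA
    have hAB : A ⊆ B := by
      rintro s ⟨hs0, hsf⟩
      refine ⟨hs0, fun hmem => ?_⟩
      have habs : |g s| < τ := abs_lt.mpr ⟨by linarith [hmem.1], hmem.2⟩
      exact hsf (hin _ (abs_nonneg _) habs)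
    by_cases hBne : B.Nonempty
    · have hBclosed : IsClosed B := by
        have : B = Set.Ici 0 ∩ g ⁻¹' (Set.Ioo (-τ) τ)ᶜ := by
          ext s; exact Iff.rfl
        rw [this]
        exact isClosed_Ici.inter (isOpen_Ioo.isClosed_compl.preimage hg)
      have hBbdd : BddBelow B := ⟨0, fun r hr => hr.1⟩
      set σ : ℝ := sInf B with hσ
      have hσmem : σ ∈ B := hBclosed.csInf_mem hBne hBbdd
      have hσ0 : 0 ≤ σ := hσmem.1
      have hgσ : τ ≤ |g σ| := by
        have h2 := hσmem.2
        rw [Set.mem_Ioo, not_and_or, not_lt, not_lt] at h2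
        rcases h2 with h | h
        · rw [abs_of_nonpos (by linarith)]; linarith
        · exact h.trans (le_abs_self _)
      -- IVT: find c ∈ [0, σ] with |g c| = τ
      have hcont : ContinuousOn (fun s => |g s|) (Set.Icc 0 σ) :=
        (hg.abs).continuousOn
      have hτIcc : τ ∈ Set.Icc (|g 0|) (|g σ|) := by
        constructor
        · rw [hg0, abs_zero]; exact hτ0
        · exact hgσ
      obtain ⟨c, hcIcc, hcτ⟩ := intermediate_value_Icc hσ0 hcont hτIcc
      have hcabs : |g c| = τ := hcτ
      have hcA : c ∈ A := ⟨hcIcc.1, by rw [hcabs]; exact hτmem.2⟩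
      have h1 : sInf A ≤ σ := le_trans (csInf_le ⟨0, fun r hr => hr.1⟩ hcA) hcIcc.2
      have h2 : sInf B ≤ sInf A := csInf_le_csInf hBbdd ⟨c, hcA⟩ hAB
      exact le_antisymm h1 h2
    · have hAne : A = ∅ := Set.eq_empty_of_subset_empty
        (hAB.trans (Set.not_nonempty_iff_eq_empty.mp hBne).subset)
      rw [hAne, (Set.not_nonempty_iff_eq_empty.mp hBne)]
  · -- S empty: τ = 0, both infima are 0
    have hSe : S = ∅ := Set.not_nonempty_iff_eq_empty.mp hSne
    have hτ0 : τ = 0 := by rw [hτ, hSe, Real.sInf_empty]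
    have hAe : {s : ℝ | 0 ≤ s ∧ f (|g s|) ∉ D} = ∅ := by
      ext s
      simp only [Set.mem_setOf_eq, Set.mem_empty_iff_false, iff_false, not_and, not_not]
      intro hs0
      by_contra hnot
      have hmem : |g s| ∈ S := ⟨abs_nonneg _, hnot⟩
      rw [hSe] at hmem
      exact hmem
    have hBe : {s : ℝ | 0 ≤ s ∧ g s ∉ Set.Ioo (-τ) τ} = Set.Ici 0 := by
      ext s
      simp [hτ0, Set.mem_Ioo]
    rw [hAe, hBe, Real.sInf_empty, csInf_Ici]

/-- For Brownian-time Brownian motion `Z¹_t = z + X(|Y_t|)` and a domain `D ⊆ ℝⁿ`: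
`P_z[τ_D(Z¹) > t] = P[η_{(-τ_D(z), τ_D(z))} > t]`, where `τ_D(z)` is the exit time of
`X` started at `z` from `D` and `η_I` is the exit time of `Y` from the interval `I`. -/
theorem btbm_exit_time_identity {Ω : Type*} [MeasurableSpace Ω]
    (P : Measure Ω) [IsProbabilityMeasure P] (n : ℕ)
    (X : ℝ → Ω → (Fin n → ℝ)) (Y : ℝ → Ω → ℝ)
    (hX : IsBrownianMotionRn P n X) (hY : IsBrownianMotion P Y)
    (hXY : IndepFun (fun ω => (fun t : ℝ => X t ω)) (fun ω => (fun t : ℝ => Y t ω)) P)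
    (D : Set (Fin n → ℝ)) (hD : IsOpen D) (z : Fin n → ℝ) (hz : z ∈ D) (t : ℝ) :
    P {ω | t < exitTime (fun s ω => z + X (|Y s ω|) ω) D ω} =
      P {ω | t < sInf {s : ℝ | 0 ≤ s ∧
        Y s ω ∉ Set.Ioo (-(exitTime (fun r ω' => z + X r ω') D ω))
          (exitTime (fun r ω' => z + X r ω') D ω)}} := by
  have hXc : ∀ ω, Continuous fun r => X r ω :=
    fun ω => continuous_pi fun i => (hX.1 i).2.1 ω
  have hX0 : ∀ ω, X 0 ω = 0 := fun ω => funext fun i => (hX.1 i).1 ω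
  congr 1
  ext ω
  simp only [Set.mem_setOf_eq, exitTime]
  exact iff_of_eq (congrArg (t < ·) (path_exit_eq (fun r => z + X r ω) (fun s => Y s ω)
    (continuous_const.add (hXc ω)) (hY.2.1 ω) (hY.1 ω) D hD
    (by show z + X 0 ω ∈ D; rw [hX0 ω, add_zero]; exact hz)))
end
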